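/- arXiv:1102.4393 — 5 statements merged into one kernel-verified Lean document; each statement's English description precedes it below -/
import Mathlib

section
/- Let F be a field, let l be a positive integer, and let q, U, Q ∈ F with q ≠ 0, U ≠ 0, and q^i ≠ 1 for every integer 1 ≤ i ≤ l. Then, with φ_n(x) = ∏_{i=1}^{n} (1 − x^i) (and φ_0(x) = 1), the following identity holds: ∏_{i=1}^{l} (1 − U^{−1} Q q^{−i+1}) · U^l = Σ_{m=0}^{l} [φ_l(q^{−1}) / (φ_{l−m}(q^{−1}) · φ_m(q^{−1}))] · ∏_{i=1}^{l−m} (1 − Q q^{−i+1}) · ∏_{i=1}^{m} (1 − U q^{i−1}) · (−1)^m q^{(m−m²)/2}. Here (m − m²)/2 = −m(m−1)/2 is an integer, so q^{(m−m²)/2} means (q^{−1})^{m(m−1)/2}. -/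
/-- `φ_n(x) = ∏_{i=1}^{n} (1 − x^i)` (so `φ_0 = 1`). -/
def phiKK {F : Type*} [Field F] (x : F) (n : ℕ) : F :=
  ∏ i ∈ Finset.Icc 1 n, (1 - x ^ i)

lemma phiKK_zero {F : Type*} [Field F] (x : F) : phiKK x 0 = 1 := by
  simp [phiKK]

lemma phiKK_succ {F : Type*} [Field F] (x : F) (n : ℕ) :
    phiKK x (n + 1) = phiKK x n * (1 - x ^ (n + 1)) := by
  rw [phiKK, phiKK, Finset.prod_Icc_succ_top (Nat.le_add_left 1 n)]

lemma phiKK_ne_zero {F : Type*} [Field F] {x : F} {n : ℕ}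
    (h : ∀ i : ℕ, 1 ≤ i → i ≤ n → x ^ i ≠ 1) : phiKK x n ≠ 0 := by
  rw [phiKK, Finset.prod_ne_zero_iff]
  intro i hi
  rw [Finset.mem_Icc] at hi
  exact sub_ne_zero.mpr fun h1 => h i hi.1 hi.2 h1.symm

/-- Pascal recurrence for the Gaussian binomial coefficients. -/
lemma pascalKK {F : Type*} [Field F] {p : F} {l k : ℕ} (hk1 : 1 ≤ k) (hkl : k ≤ l)
    (hp : ∀ i : ℕ, 1 ≤ i → i ≤ l + 1 → p ^ i ≠ 1) :
    phiKK p (l + 1) / (phiKK p (l + 1 - k) * phiKK p k) =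
      phiKK p l / (phiKK p (l + 1 - k) * phiKK p (k - 1)) +
        p ^ k * (phiKK p l / (phiKK p (l - k) * phiKK p k)) := by
  obtain ⟨j, rfl⟩ := Nat.exists_eq_add_of_le hk1  -- k = 1 + j
  obtain ⟨t, rfl⟩ := Nat.exists_eq_add_of_le hkl  -- l = (1+j) + t
  have e1 : 1 + j + t + 1 - (1 + j) = t + 1 := by omega
  have e2 : 1 + j + t - (1 + j) = t := by omega
  have e3 : 1 + j = j + 1 := by omega
  have e4 : 1 + j - 1 = j := by omega
  have e5 : 1 + j + t + 1 = (1 + j + t) + 1 := by omega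
  rw [e1, e2, e4, e5, phiKK_succ, e3, phiKK_succ, phiKK_succ]
  have hl1 : phiKK p (1 + j + t) ≠ 0 :=
    phiKK_ne_zero (fun i h1 h2 => hp i h1 (by omega))
  have hj : phiKK p j ≠ 0 :=
    phiKK_ne_zero (fun i h1 h2 => hp i h1 (by omega))
  have ht : phiKK p t ≠ 0 :=
    phiKK_ne_zero (fun i h1 h2 => hp i h1 (by omega))
  have h1 : (1 : F) - p ^ (t + 1) ≠ 0 :=
    sub_ne_zero.mpr fun h => hp (t + 1) (by omega) (by omega) h.symm
  have h2 : (1 : F) - p ^ (j + 1) ≠ 0 :=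
    sub_ne_zero.mpr fun h => hp (j + 1) (by omega) (by omega) h.symm
  have hpow : p ^ (j + 1) * p ^ (t + 1) = p ^ (1 + j + t + 1) := by
    rw [← pow_add]; ring_nf
  field_simp
  linear_combination (phiKK p (j + 1 + t) * phiKK p t ^ 2 * phiKK p j ^ 2 * (1 - p ^ (t + 1)) * (1 - p ^ (j + 1))) * hpow

lemma sumshiftKK {F : Type*} [Field F] (f h g : ℕ → F) (l : ℕ)
    (h0 : g 0 = h 0) (htop : g (l + 1) = f (l + 1))
    (hmid : ∀ m, m < l → g (m + 1) = f (m + 1) + h (m + 1)) :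
    ∑ m ∈ Finset.range (l + 1), (f (m + 1) + h m) =
      ∑ m ∈ Finset.range (l + 2), g m := by
  rw [Finset.sum_add_distrib, Finset.sum_range_succ' g (l + 1),
    Finset.sum_range_succ (fun m => g (m + 1)) l,
    Finset.sum_range_succ' h l,
    Finset.sum_range_succ (fun m => f (m + 1)) l,
    Finset.sum_congr rfl (fun m hm => hmid m (Finset.mem_range.mp hm)),
    Finset.sum_add_distrib, h0, htop]
  ring

lemma stepKK {F : Type*} [Field F] (p U Q : F) (B C : ℕ → F) (l : ℕ)
    (hB : ∀ n, B (n + 1) = B n * (1 - Q * p ^ n))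
    (hC : ∀ n, C (n + 1) = C n * (U - p ^ n))
    (hp : ∀ i : ℕ, 1 ≤ i → i ≤ l + 1 → p ^ i ≠ 1) :
    (∑ m ∈ Finset.range (l + 1),
        phiKK p l / (phiKK p (l - m) * phiKK p m) * (B (l - m) * C m)) * (U - Q * p ^ l) =
      ∑ m ∈ Finset.range (l + 2),
        phiKK p (l + 1) / (phiKK p (l + 1 - m) * phiKK p m) * (B (l + 1 - m) * C m) := by
  have hφ : ∀ n, n ≤ l + 1 → phiKK p n ≠ 0 := fun n hn =>
    phiKK_ne_zero fun i h1 h2 => hp i h1 (le_trans h2 hn)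
  have key1 : ∀ m ∈ Finset.range (l + 1),
      phiKK p l / (phiKK p (l - m) * phiKK p m) * (B (l - m) * C m) * (U - Q * p ^ l) =
        (fun k => phiKK p l / (phiKK p (l + 1 - k) * phiKK p (k - 1)) *
            (B (l + 1 - k) * C k)) (m + 1) +
        (fun k => p ^ k * (phiKK p l / (phiKK p (l - k) * phiKK p k) *
            (B (l + 1 - k) * C k))) m := by
    intro m hm
    rw [Finset.mem_range] at hm
    have hm' : m ≤ l := Nat.lt_succ_iff.mp hm
    beta_reduce
    have e1 : l + 1 - (m + 1) = l - m := by omega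
    have e2 : m + 1 - 1 = m := by omega
    have e3 : l + 1 - m = (l - m) + 1 := by omega
    rw [e1, e2, e3, hC m, hB (l - m)]
    have epow : p ^ m * p ^ (l - m) = p ^ l := by rw [← pow_add]; congr 1; omega
    linear_combination (phiKK p l / (phiKK p (l - m) * phiKK p m) * B (l - m) * C m * Q) * epow
  rw [Finset.sum_mul, Finset.sum_congr rfl key1]
  refine sumshiftKK
    (fun k => phiKK p l / (phiKK p (l + 1 - k) * phiKK p (k - 1)) * (B (l + 1 - k) * C k))
    (fun k => p ^ k * (phiKK p l / (phiKK p (l - k) * phiKK p k) * (B (l + 1 - k) * C k)))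
    (fun k => phiKK p (l + 1) / (phiKK p (l + 1 - k) * phiKK p k) * (B (l + 1 - k) * C k))
    l ?_ ?_ ?_
  · simp only [Nat.sub_zero, pow_zero, one_mul, phiKK_zero, mul_one,
      div_self (hφ (l + 1) le_rfl), div_self (hφ l (Nat.le_succ l))]
  · simp only [Nat.sub_self, Nat.add_sub_cancel, phiKK_zero, one_mul,
      div_self (hφ (l + 1) le_rfl), div_self (hφ l (Nat.le_succ l))]
  · intro m hm
    beta_reduce
    have hpas := pascalKK (p := p) (l := l) (k := m + 1) (by omega) (by omega) hp
    linear_combination (B (l + 1 - (m + 1)) * C (m + 1)) * hpas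

lemma keyKK {F : Type*} [Field F] (p U Q : F) (l : ℕ)
    (hp : ∀ i : ℕ, 1 ≤ i → i ≤ l → p ^ i ≠ 1) :
    ∏ i ∈ Finset.range l, (U - Q * p ^ i) =
      ∑ m ∈ Finset.range (l + 1),
        phiKK p l / (phiKK p (l - m) * phiKK p m) *
          ((∏ i ∈ Finset.range (l - m), (1 - Q * p ^ i)) *
            ∏ i ∈ Finset.range m, (U - p ^ i)) := by
  induction l with
  | zero => simp [phiKK_zero]
  | succ l IH =>
    have hp' : ∀ i : ℕ, 1 ≤ i → i ≤ l → p ^ i ≠ 1 := fun i h1 h2 => hp i h1 (by omega)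
    rw [Finset.prod_range_succ, IH hp']
    exact stepKK p U Q (fun n => ∏ i ∈ Finset.range n, (1 - Q * p ^ i))
      (fun n => ∏ i ∈ Finset.range n, (U - p ^ i)) l
      (fun n => Finset.prod_range_succ _ n) (fun n => Finset.prod_range_succ _ n) hp

/-- Lemma 5.3.6: for a field `F`, `l ≥ 1`, and `q, U, Q ∈ F` with `q ≠ 0`, `U ≠ 0` and
`q^i ≠ 1` for `1 ≤ i ≤ l`, one has
`∏_{i=1}^{l} (1 − U⁻¹ Q q^{−i+1}) · U^l
  = Σ_{m=0}^{l} [φ_l(q⁻¹)/(φ_{l−m}(q⁻¹)·φ_m(q⁻¹))] · ∏_{i=1}^{l−m}(1 − Q q^{−i+1})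
      · ∏_{i=1}^{m}(1 − U q^{i−1}) · (−1)^m · q^{(m−m²)/2}`,
where `q^{(m−m²)/2} = (q⁻¹)^{m(m−1)/2}`. -/
theorem stmt0 {F : Type*} [Field F] (l : ℕ) (hl : 1 ≤ l) (q U Q : F)
    (hq : q ≠ 0) (hU : U ≠ 0) (hqi : ∀ i : ℕ, 1 ≤ i → i ≤ l → q ^ i ≠ 1) :
    (∏ i ∈ Finset.Icc 1 l, (1 - U⁻¹ * Q * (q⁻¹) ^ (i - 1))) * U ^ l =
      ∑ m ∈ Finset.range (l + 1),
        phiKK q⁻¹ l / (phiKK q⁻¹ (l - m) * phiKK q⁻¹ m) *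
          (∏ i ∈ Finset.Icc 1 (l - m), (1 - Q * (q⁻¹) ^ (i - 1))) *
          (∏ i ∈ Finset.Icc 1 m, (1 - U * q ^ (i - 1))) *
          (-1) ^ m * (q⁻¹) ^ (m * (m - 1) / 2) := by
  have hp : ∀ i : ℕ, 1 ≤ i → i ≤ l → (q⁻¹ : F) ^ i ≠ 1 := by
    intro i h1 h2 h
    apply hqi i h1 h2
    rw [inv_pow] at h
    rw [← inv_inv (q ^ i), h, inv_one]
  have e1 : ∏ i ∈ Finset.Icc 1 l, (1 - U⁻¹ * Q * (q⁻¹) ^ (i - 1)) =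
      ∏ i ∈ Finset.range l, (1 - U⁻¹ * Q * (q⁻¹) ^ i) := by
    rw [← Finset.Ico_add_one_right_eq_Icc, Finset.prod_Ico_eq_prod_range]; simp
  have eB : ∀ n : ℕ, ∏ i ∈ Finset.Icc 1 n, (1 - Q * (q⁻¹) ^ (i - 1)) =
      ∏ i ∈ Finset.range n, (1 - Q * (q⁻¹) ^ i) := by
    intro n; rw [← Finset.Ico_add_one_right_eq_Icc, Finset.prod_Ico_eq_prod_range]; simp
  have eC : ∀ n : ℕ, ∏ i ∈ Finset.Icc 1 n, (1 - U * q ^ (i - 1)) =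
      ∏ i ∈ Finset.range n, (1 - U * q ^ i) := by
    intro n; rw [← Finset.Ico_add_one_right_eq_Icc, Finset.prod_Ico_eq_prod_range]; simp
  have eCm : ∀ m : ℕ, ∏ i ∈ Finset.range m, (U - (q⁻¹ : F) ^ i) =
      (∏ i ∈ Finset.range m, (1 - U * q ^ i)) * (-1) ^ m * (q⁻¹) ^ (m * (m - 1) / 2) := by
    intro m
    have h1 : ∏ i ∈ Finset.range m, (U - (q⁻¹ : F) ^ i) =
        ∏ i ∈ Finset.range m, ((1 - U * q ^ i) * (-(q⁻¹ ^ i))) := by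
      refine Finset.prod_congr rfl fun i _ => ?_
      have hqi1 : q ^ i * (q⁻¹ : F) ^ i = 1 := by
        rw [← mul_pow, mul_inv_cancel₀ hq, one_pow]
      linear_combination (-U) * hqi1
    have h2 : ∏ i ∈ Finset.range m, (-((q⁻¹ : F) ^ i)) =
        (-1) ^ m * (q⁻¹) ^ (m * (m - 1) / 2) := by
      calc ∏ i ∈ Finset.range m, (-((q⁻¹ : F) ^ i))
          = ∏ i ∈ Finset.range m, ((-1) * (q⁻¹ : F) ^ i) :=
            Finset.prod_congr rfl fun i _ => by ring
        _ = (∏ _i ∈ Finset.range m, (-1 : F)) * ∏ i ∈ Finset.range m, (q⁻¹ : F) ^ i :=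
            Finset.prod_mul_distrib
        _ = (-1) ^ m * (q⁻¹) ^ (∑ i ∈ Finset.range m, i) := by
            rw [Finset.prod_const, Finset.card_range, Finset.prod_pow_eq_pow_sum]
        _ = (-1) ^ m * (q⁻¹) ^ (m * (m - 1) / 2) := by rw [Finset.sum_range_id]
    rw [h1, Finset.prod_mul_distrib, h2]; ring
  calc (∏ i ∈ Finset.Icc 1 l, (1 - U⁻¹ * Q * (q⁻¹) ^ (i - 1))) * U ^ l
      = ∏ i ∈ Finset.range l, ((1 - U⁻¹ * Q * (q⁻¹) ^ i) * U) := by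
        rw [e1, Finset.prod_mul_distrib, Finset.prod_const, Finset.card_range]
    _ = ∏ i ∈ Finset.range l, (U - Q * (q⁻¹) ^ i) :=
        Finset.prod_congr rfl fun i _ => by field_simp
    _ = ∑ m ∈ Finset.range (l + 1),
          phiKK q⁻¹ l / (phiKK q⁻¹ (l - m) * phiKK q⁻¹ m) *
            ((∏ i ∈ Finset.range (l - m), (1 - Q * (q⁻¹) ^ i)) *
              ∏ i ∈ Finset.range m, (U - (q⁻¹) ^ i)) := keyKK q⁻¹ U Q l hp
    _ = _ := by
        refine Finset.sum_congr rfl fun m _ => ?_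
        rw [eB, eC, eCm m]; ring
end

section
/- Let p be a prime and let k, m be positive integers. Then lim_{a→∞} p^{−a(4km−m²)} · #{(X, Y) ∈ (M_{2k,m}(ℤ/p^aℤ))² : XᵀY = 1_m} = ∏_{i=0}^{m−1} (1 − p^{i−2k}). -/
open Matrix Filter Topology

open Function


section AuxCard

variable {M N : Type*} [AddCommGroup M] [AddCommGroup N] [Finite M] [Finite N]

private lemma fiberEquiv (f : M →+ N) (hf : Surjective f) (c d : N) :
    Nat.card {x // f x = c} = Nat.card {x // f x = d} := by
  obtain ⟨u, hu⟩ := hf (d - c)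
  exact Nat.card_congr
    ⟨fun x => ⟨x.1 + u, by rw [map_add, x.2, hu]; abel⟩,
     fun x => ⟨x.1 - u, by rw [map_sub, x.2, hu]; abel⟩,
     fun x => by ext; simp, fun x => by ext; simp⟩

private def pullbackEquiv (f : M → N) (P : N → Prop) :
    {x // P (f x)} ≃ Σ y : Subtype P, {x // f x = y.1} :=
  (Equiv.sigmaSubtypeFiberEquivSubtype f (fun _ => Iff.rfl)).symm

private lemma nat_card_sigma {ι : Type*} [Fintype ι] (g : ι → Type*) [∀ i, Finite (g i)] :
    Nat.card (Σ i, g i) = ∑ i : ι, Nat.card (g i) := by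
  letI := fun i => Fintype.ofFinite (g i)
  simp [Nat.card_eq_fintype_card]

private lemma card_pullback (f : M →+ N) (hf : Surjective f) (P : N → Prop) :
    Nat.card {x // P (f x)} * Nat.card N = Nat.card {y // P y} * Nat.card M := by
  classical
  cases nonempty_fintype M
  cases nonempty_fintype N
  have key : ∀ c : N, Nat.card {x // f x = c} = Nat.card {x // f x = (0 : N)} :=
    fun c => fiberEquiv f hf c 0
  have h1 : Nat.card M = Nat.card N * Nat.card {x // f x = (0 : N)} := by
    rw [← Nat.card_congr (Equiv.sigmaFiberEquiv f), nat_card_sigma]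
    simp_rw [key]
    rw [Finset.sum_const, Finset.card_univ, smul_eq_mul, Nat.card_eq_fintype_card,
      Nat.card_eq_fintype_card]
  have h2 : Nat.card {x // P (f x)} =
      Nat.card {y // P y} * Nat.card {x // f x = (0 : N)} := by
    rw [Nat.card_congr (pullbackEquiv f P), nat_card_sigma]
    simp_rw [key]
    rw [Finset.sum_const, Finset.card_univ, smul_eq_mul, Nat.card_eq_fintype_card,
      Nat.card_eq_fintype_card]
  rw [h2, h1]; ring

private lemma card_fiber (f : M →+ N) (hf : Surjective f) (c : N) :
    Nat.card {x // f x = c} * Nat.card N = Nat.card M := by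
  classical
  have h := card_pullback f hf (· = c)
  have : Nat.card {y // y = c} = 1 := by
    rw [Nat.card_eq_fintype_card]
    exact Fintype.card_subtype_eq c
  rw [this, one_mul] at h
  exact h

end AuxCard

private lemma card_matrix (α : Type*) [Finite α] (i j : ℕ) :
    Nat.card (Matrix (Fin i) (Fin j) α) = Nat.card α ^ (i * j) := by
  rw [← Nat.card_congr (Matrix.of (m := Fin i) (n := Fin j) (α := α))]
  simp [Nat.card_fun, ← pow_mul, mul_comm]


section FieldSide
variable (p : ℕ) [hp : Fact p.Prime] (k m : ℕ)

private lemma exists_left_inv_iff (A : Matrix (Fin (2 * k)) (Fin m) (ZMod p)) :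
    (∃ W : Matrix (Fin m) (Fin (2 * k)) (ZMod p), W * A = 1) ↔
      LinearIndependent (ZMod p) (fun i => Aᵀ i) := by
  constructor
  · rintro ⟨W, hW⟩
    rw [show (fun i => Aᵀ i) = A.col from rfl, ← Matrix.mulVec_injective_iff]
    intro u v huv
    have h2 : W *ᵥ (A *ᵥ u) = W *ᵥ (A *ᵥ v) := by rw [huv]
    rwa [Matrix.mulVec_mulVec, Matrix.mulVec_mulVec, hW, Matrix.one_mulVec,
      Matrix.one_mulVec] at h2
  · intro h
    have hinj : Injective (Matrix.toLin' A) := by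
      have : ⇑(Matrix.toLin' A) = A.mulVec := by
        funext v; exact Matrix.toLin'_apply A v
      rw [this]
      exact Matrix.mulVec_injective_iff.mpr h
    obtain ⟨g, hg⟩ := (Matrix.toLin' A).exists_leftInverse_of_injective
      (LinearMap.ker_eq_bot.mpr hinj)
    refine ⟨LinearMap.toMatrix' g, ?_⟩
    have h3 := congrArg LinearMap.toMatrix' hg
    rwa [LinearMap.toMatrix'_comp, LinearMap.toMatrix'_toLin', LinearMap.toMatrix'_id] at h3

private lemma exists_right_inv_iff (Z : Matrix (Fin m) (Fin (2 * k)) (ZMod p)) :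
    (∃ Y : Matrix (Fin (2 * k)) (Fin m) (ZMod p), Z * Y = 1) ↔
      LinearIndependent (ZMod p) (fun i => Z i) := by
  have h1 : (∃ Y : Matrix (Fin (2 * k)) (Fin m) (ZMod p), Z * Y = 1) ↔
      (∃ W : Matrix (Fin m) (Fin (2 * k)) (ZMod p), W * Zᵀ = 1) := by
    constructor
    · rintro ⟨Y, hY⟩
      exact ⟨Yᵀ, by rw [← Matrix.transpose_mul, hY, Matrix.transpose_one]⟩
    · rintro ⟨W, hW⟩
      refine ⟨Wᵀ, ?_⟩
      have := congrArg Matrix.transpose hW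
      rwa [Matrix.transpose_mul, Matrix.transpose_transpose, Matrix.transpose_one] at this
  rw [h1, exists_left_inv_iff]
  simp [Matrix.transpose_transpose]

private lemma card_right_inv_field (hkm : m ≤ 2 * k) :
    Nat.card {Z : Matrix (Fin m) (Fin (2 * k)) (ZMod p) //
        ∃ Y : Matrix (Fin (2 * k)) (Fin m) (ZMod p), Z * Y = 1} =
      ∏ i ∈ Finset.range m, (p ^ (2 * k) - p ^ i) := by
  have e : {Z : Matrix (Fin m) (Fin (2 * k)) (ZMod p) //
      ∃ Y : Matrix (Fin (2 * k)) (Fin m) (ZMod p), Z * Y = 1} ≃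
      {v : Fin m → (Fin (2 * k) → ZMod p) // LinearIndependent (ZMod p) v} :=
    Equiv.subtypeEquiv (Matrix.of (m := Fin m) (n := Fin (2 * k)) (α := ZMod p)).symm
      (fun Z => (exists_right_inv_iff p k m Z))
  have hrank : m ≤ Module.finrank (ZMod p) (Fin (2 * k) → ZMod p) := by
    rw [Module.finrank_fin_fun]; exact hkm
  rw [Nat.card_congr e, card_linearIndependent hrank]
  simp only [ZMod.card, Module.finrank_fin_fun]
  exact Fin.prod_univ_eq_prod_range (fun i => p ^ (2 * k) - p ^ i) m

private lemma empty_right_inv_field (hkm : 2 * k < m)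
    (Z : Matrix (Fin m) (Fin (2 * k)) (ZMod p)) :
    ¬ (∃ Y : Matrix (Fin (2 * k)) (Fin m) (ZMod p), Z * Y = 1) := by
  intro h
  have hli := (exists_right_inv_iff p k m Z).mp h
  have := hli.fintype_card_le_finrank
  rw [Module.finrank_fin_fun, Fintype.card_fin] at this
  omega

end FieldSide

/-- Lemma 5.1.10(2) (split case): for a prime `p` and positive integers `k, m`,
`lim_{a→∞} p^{−a(4km−m²)} · #{(X,Y) ∈ M_{2k,m}(ℤ/p^a)² : Xᵀ Y = 1_m}
  = ∏_{i=0}^{m−1} (1 − p^{i−2k})`. -/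
theorem stmt3 (p : ℕ) [hp : Fact p.Prime] (k m : ℕ) (hk : 1 ≤ k) (hm : 1 ≤ m) :
    Tendsto (fun a : ℕ =>
        (p : ℝ) ^ (-(a : ℤ) * (4 * k * m - m ^ 2)) *
          (Nat.card {XY : Matrix (Fin (2 * k)) (Fin m) (ZMod (p ^ a)) ×
              Matrix (Fin (2 * k)) (Fin m) (ZMod (p ^ a)) //
            XY.1ᵀ * XY.2 = 1} : ℝ))
      atTop (𝓝 (∏ i ∈ Finset.range m, (1 - (p : ℝ) ^ ((i : ℤ) - 2 * k)))) := by
  classical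
  haveI hNZp : NeZero p := ⟨hp.out.ne_zero⟩
  have hppos : (0 : ℝ) < (p : ℝ) := by exact_mod_cast hp.out.pos
  have hx : (p : ℝ) ≠ 0 := hppos.ne'
  set c0 : ℕ := Nat.card {Z : Matrix (Fin m) (Fin (2 * k)) (ZMod p) //
      ∃ Y : Matrix (Fin (2 * k)) (Fin m) (ZMod p), Z * Y = 1} with hc0
  have hprod : (∏ i ∈ Finset.range m, (1 - (p : ℝ) ^ ((i : ℤ) - 2 * k)))
      = (c0 : ℝ) * ((p : ℝ) ^ (2 * k * m))⁻¹ := by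
    rcases le_or_gt m (2 * k) with hkm | hkm
    · rw [hc0, card_right_inv_field p k m hkm, Nat.cast_prod]
      have hfac : ∀ i ∈ Finset.range m,
          ((p ^ (2 * k) - p ^ i : ℕ) : ℝ) = (p : ℝ) ^ (2 * k) - (p : ℝ) ^ i := by
        intro i hi
        have hle : p ^ i ≤ p ^ (2 * k) :=
          Nat.pow_le_pow_right hp.out.pos (le_trans (Finset.mem_range.mp hi).le hkm)
        rw [Nat.cast_sub hle]
        push_cast
        ring
      rw [Finset.prod_congr rfl hfac]
      have hinv : (((p : ℝ) ^ (2 * k * m))⁻¹ : ℝ)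
          = ∏ _i ∈ Finset.range m, ((p : ℝ) ^ (2 * k))⁻¹ := by
        rw [Finset.prod_const, Finset.card_range, inv_pow, ← pow_mul]
      rw [hinv, ← Finset.prod_mul_distrib]
      refine Finset.prod_congr rfl fun i hi => ?_
      have hx2k : (p : ℝ) ^ (2 * k) ≠ 0 := pow_ne_zero _ hx
      rw [sub_mul, mul_inv_cancel₀ hx2k]
      congr 1
      have hcast : ((i : ℤ)) - 2 * (k : ℤ) = ((i : ℕ) : ℤ) - ((2 * k : ℕ) : ℤ) := by
        push_cast; ring
      rw [hcast, zpow_sub₀ hx, zpow_natCast, zpow_natCast, div_eq_mul_inv]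
    · have hc0z : c0 = 0 := by
        rw [hc0]
        haveI : IsEmpty {Z : Matrix (Fin m) (Fin (2 * k)) (ZMod p) //
            ∃ Y : Matrix (Fin (2 * k)) (Fin m) (ZMod p), Z * Y = 1} :=
          ⟨fun Z => empty_right_inv_field p k m hkm Z.1 Z.2⟩
        exact Nat.card_of_isEmpty
      rw [hc0z, Nat.cast_zero, zero_mul]
      refine Finset.prod_eq_zero (Finset.mem_range.mpr hkm) ?_
      have h0 : ((2 * k : ℕ) : ℤ) - 2 * (k : ℤ) = 0 := by push_cast; ring
      rw [h0, zpow_zero, sub_self]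
  refine Tendsto.congr' ?_ tendsto_const_nhds
  refine eventually_atTop.mpr ⟨1, fun a ha => ?_⟩
  haveI : NeZero (p ^ a) := ⟨pow_ne_zero a hp.out.ne_zero⟩
  set π : ZMod (p ^ a) →+* ZMod p :=
    ZMod.castHom (dvd_pow_self p (Nat.one_le_iff_ne_zero.mp ha)) (ZMod p) with hπ
  have hπs : Function.Surjective π := by
    intro y
    obtain ⟨n, rfl⟩ := ZMod.natCast_zmod_surjective y
    exact ⟨n, map_natCast _ n⟩
  have scalar_lift : ∀ x : ZMod (p ^ a), IsUnit (π x) → IsUnit x := by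
    intro x hxu
    obtain ⟨n, rfl⟩ := ZMod.natCast_zmod_surjective x
    rw [map_natCast] at hxu
    rw [ZMod.isUnit_iff_coprime] at hxu ⊢
    exact hxu.pow_right a
  have unit_lift : ∀ Mx : Matrix (Fin m) (Fin m) (ZMod (p ^ a)), Mx.map π = 1 → IsUnit Mx := by
    intro Mx hMx
    rw [Matrix.isUnit_iff_isUnit_det]
    apply scalar_lift
    rw [RingHom.map_det]
    have : π.mapMatrix Mx = Mx.map π := rfl
    rw [this, hMx, Matrix.det_one]
    exact isUnit_one
  have hresid : ∀ Z : Matrix (Fin m) (Fin (2 * k)) (ZMod (p ^ a)), (∃ Y : Matrix (Fin (2 * k)) (Fin m) (ZMod (p ^ a)), Z * Y = 1) ↔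
      (∃ Y' : Matrix (Fin (2 * k)) (Fin m) (ZMod p), (Z.map π) * Y' = 1) := by
    intro Z
    constructor
    · rintro ⟨Y, hY⟩
      exact ⟨Y.map π, by
        rw [← Matrix.map_mul, hY, Matrix.map_one π (map_zero π) (map_one π)]⟩
    · rintro ⟨Y', hY'⟩
      set Y₀ : Matrix (Fin (2 * k)) (Fin m) (ZMod (p ^ a)) := Matrix.of fun i j => (hπs (Y' i j)).choose with hY₀def
      have hY₀ : Y₀.map π = Y' := by
        ext i j
        exact (hπs (Y' i j)).choose_spec
      have hmap : (Z * Y₀).map π = 1 := by rw [Matrix.map_mul, hY₀, hY']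
      obtain ⟨u, hu⟩ := unit_lift _ hmap
      refine ⟨Y₀ * (↑u⁻¹ : Matrix (Fin m) (Fin m) (ZMod (p ^ a))), ?_⟩
      rw [← Matrix.mul_assoc, ← hu]
      exact u.mul_inv
  -- step A
  have eT : {XY : Matrix (Fin (2 * k)) (Fin m) (ZMod (p ^ a)) × Matrix (Fin (2 * k)) (Fin m) (ZMod (p ^ a)) // XY.1ᵀ * XY.2 = 1} ≃ {ZY : Matrix (Fin m) (Fin (2 * k)) (ZMod (p ^ a)) × Matrix (Fin (2 * k)) (Fin m) (ZMod (p ^ a)) // ZY.1 * ZY.2 = 1} :=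
    Equiv.subtypeEquiv
      (Equiv.prodCongr
        (⟨fun X => Xᵀ, fun Z => Zᵀ, fun X => Matrix.transpose_transpose X,
          fun Z => Matrix.transpose_transpose Z⟩ : Matrix (Fin (2 * k)) (Fin m) (ZMod (p ^ a)) ≃ Matrix (Fin m) (Fin (2 * k)) (ZMod (p ^ a)))
        (Equiv.refl (Matrix (Fin (2 * k)) (Fin m) (ZMod (p ^ a)))))
      (fun XY => Iff.rfl)
  have eS : {ZY : Matrix (Fin m) (Fin (2 * k)) (ZMod (p ^ a)) × Matrix (Fin (2 * k)) (Fin m) (ZMod (p ^ a)) // ZY.1 * ZY.2 = 1} ≃ Σ Z : Matrix (Fin m) (Fin (2 * k)) (ZMod (p ^ a)), {Y : Matrix (Fin (2 * k)) (Fin m) (ZMod (p ^ a)) // Z * Y = 1} :=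
    Equiv.subtypeProdEquivSigmaSubtype (fun (Z : Matrix (Fin m) (Fin (2 * k)) (ZMod (p ^ a))) (Y : Matrix (Fin (2 * k)) (Fin m) (ZMod (p ^ a))) => Z * Y = 1)
  have hNsum : Nat.card {XY : Matrix (Fin (2 * k)) (Fin m) (ZMod (p ^ a)) × Matrix (Fin (2 * k)) (Fin m) (ZMod (p ^ a)) // XY.1ᵀ * XY.2 = 1}
      = ∑ Z : Matrix (Fin m) (Fin (2 * k)) (ZMod (p ^ a)), Nat.card {Y : Matrix (Fin (2 * k)) (Fin m) (ZMod (p ^ a)) // Z * Y = 1} := by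
    rw [Nat.card_congr (eT.trans eS), nat_card_sigma]
  have hterm : ∀ Z : Matrix (Fin m) (Fin (2 * k)) (ZMod (p ^ a)), Nat.card {Y : Matrix (Fin (2 * k)) (Fin m) (ZMod (p ^ a)) // Z * Y = 1} * (p ^ a) ^ (m * m) =
      if (∃ Y : Matrix (Fin (2 * k)) (Fin m) (ZMod (p ^ a)), Z * Y = 1) then (p ^ a) ^ (2 * k * m) else 0 := by
    intro Z
    by_cases hZ : ∃ Y : Matrix (Fin (2 * k)) (Fin m) (ZMod (p ^ a)), Z * Y = 1
    · rw [if_pos hZ]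
      obtain ⟨Y₀, hY₀⟩ := hZ
      let φ : Matrix (Fin (2 * k)) (Fin m) (ZMod (p ^ a)) →+ Matrix (Fin m) (Fin m) (ZMod (p ^ a)) :=
        { toFun := fun Y => Z * Y
          map_zero' := Matrix.mul_zero _
          map_add' := fun Y₁ Y₂ => Matrix.mul_add _ _ _ }
      have hφs : Function.Surjective φ := by
        intro W
        refine ⟨Y₀ * W, ?_⟩
        show Z * (Y₀ * W) = W
        rw [← Matrix.mul_assoc, hY₀, Matrix.one_mul]
      have hcf := card_fiber φ hφs 1
      rw [card_matrix, card_matrix, Nat.card_zmod] at hcf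
      have hsub : Nat.card {Y : Matrix (Fin (2 * k)) (Fin m) (ZMod (p ^ a)) // φ Y = 1} = Nat.card {Y : Matrix (Fin (2 * k)) (Fin m) (ZMod (p ^ a)) // Z * Y = 1} := rfl
      rw [hsub] at hcf
      exact hcf
    · rw [if_neg hZ]
      haveI : IsEmpty {Y : Matrix (Fin (2 * k)) (Fin m) (ZMod (p ^ a)) // Z * Y = 1} := ⟨fun Y => hZ ⟨Y.1, Y.2⟩⟩
      rw [Nat.card_of_isEmpty, zero_mul]
  have hA : Nat.card {XY : Matrix (Fin (2 * k)) (Fin m) (ZMod (p ^ a)) × Matrix (Fin (2 * k)) (Fin m) (ZMod (p ^ a)) // XY.1ᵀ * XY.2 = 1} * (p ^ a) ^ (m * m)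
      = Nat.card {Z : Matrix (Fin m) (Fin (2 * k)) (ZMod (p ^ a)) // ∃ Y : Matrix (Fin (2 * k)) (Fin m) (ZMod (p ^ a)), Z * Y = 1} * (p ^ a) ^ (2 * k * m) := by
    rw [hNsum, Finset.sum_mul, Finset.sum_congr rfl (fun Z _ => hterm Z),
      ← Finset.sum_filter, Finset.sum_const, smul_eq_mul]
    congr 1
    rw [Nat.card_eq_fintype_card, Fintype.card_subtype]
  -- step B
  let Φ : Matrix (Fin m) (Fin (2 * k)) (ZMod (p ^ a)) →+ Matrix (Fin m) (Fin (2 * k)) (ZMod p) :=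
    { toFun := fun Z => Z.map π
      map_zero' := Matrix.map_zero π (map_zero π)
      map_add' := fun Z₁ Z₂ => Matrix.map_add π (fun x y => map_add π x y) Z₁ Z₂ }
  have hΦs : Function.Surjective Φ := by
    intro W
    refine ⟨Matrix.of fun i j => (hπs (W i j)).choose, ?_⟩
    show (Matrix.of fun i j => (hπs (W i j)).choose).map π = W
    ext i j
    exact (hπs (W i j)).choose_spec
  have hScongr : Nat.card {Z : Matrix (Fin m) (Fin (2 * k)) (ZMod (p ^ a)) // ∃ Y : Matrix (Fin (2 * k)) (Fin m) (ZMod (p ^ a)), Z * Y = 1}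
      = Nat.card {Z : Matrix (Fin m) (Fin (2 * k)) (ZMod (p ^ a)) //
          (fun Z' : Matrix (Fin m) (Fin (2 * k)) (ZMod p) =>
            ∃ Y' : Matrix (Fin (2 * k)) (Fin m) (ZMod p), Z' * Y' = 1) (Φ Z)} :=
    Nat.card_congr (Equiv.subtypeEquivRight fun Z => hresid Z)
  have hB := card_pullback Φ hΦs
    (fun Z' : Matrix (Fin m) (Fin (2 * k)) (ZMod p) =>
      ∃ Y' : Matrix (Fin (2 * k)) (Fin m) (ZMod p), Z' * Y' = 1)
  rw [card_matrix, card_matrix, Nat.card_zmod, Nat.card_zmod, ← hc0] at hB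
  rw [← hScongr] at hB
  -- combine to a natural-number identity
  have hnat : Nat.card {XY : Matrix (Fin (2 * k)) (Fin m) (ZMod (p ^ a)) × Matrix (Fin (2 * k)) (Fin m) (ZMod (p ^ a)) // XY.1ᵀ * XY.2 = 1} * (p ^ a) ^ (m * m)
        * p ^ (m * (2 * k))
      = c0 * (p ^ a) ^ (m * (2 * k)) * (p ^ a) ^ (2 * k * m) := by
    calc Nat.card {XY : Matrix (Fin (2 * k)) (Fin m) (ZMod (p ^ a)) × Matrix (Fin (2 * k)) (Fin m) (ZMod (p ^ a)) // XY.1ᵀ * XY.2 = 1} * (p ^ a) ^ (m * m)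
          * p ^ (m * (2 * k))
        = (Nat.card {Z : Matrix (Fin m) (Fin (2 * k)) (ZMod (p ^ a)) // ∃ Y : Matrix (Fin (2 * k)) (Fin m) (ZMod (p ^ a)), Z * Y = 1} * (p ^ a) ^ (2 * k * m))
          * p ^ (m * (2 * k)) := by rw [hA]
      _ = (Nat.card {Z : Matrix (Fin m) (Fin (2 * k)) (ZMod (p ^ a)) // ∃ Y : Matrix (Fin (2 * k)) (Fin m) (ZMod (p ^ a)), Z * Y = 1} * p ^ (m * (2 * k)))
          * (p ^ a) ^ (2 * k * m) := by ring
      _ = (c0 * (p ^ a) ^ (m * (2 * k))) * (p ^ a) ^ (2 * k * m) := by rw [hB]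
      _ = _ := by ring
  have hreal : (Nat.card {XY : Matrix (Fin (2 * k)) (Fin m) (ZMod (p ^ a)) × Matrix (Fin (2 * k)) (Fin m) (ZMod (p ^ a)) // XY.1ᵀ * XY.2 = 1} : ℝ)
        * ((p : ℝ) ^ a) ^ (m * m) * (p : ℝ) ^ (m * (2 * k))
      = (c0 : ℝ) * ((p : ℝ) ^ a) ^ (m * (2 * k)) * ((p : ℝ) ^ a) ^ (2 * k * m) := by
    exact_mod_cast congrArg (Nat.cast (R := ℝ)) hnat
  -- final real computation
  show (∏ i ∈ Finset.range m, (1 - (p : ℝ) ^ ((i : ℤ) - 2 * k)))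
      = (p : ℝ) ^ (-(a : ℤ) * (4 * k * m - m ^ 2))
        * (Nat.card {XY : Matrix (Fin (2 * k)) (Fin m) (ZMod (p ^ a)) × Matrix (Fin (2 * k)) (Fin m) (ZMod (p ^ a)) // XY.1ᵀ * XY.2 = 1} : ℝ)
  rw [hprod]
  have hE : (p : ℝ) ^ (-(a : ℤ) * (4 * k * m - m ^ 2))
      = ((p : ℝ) ^ (a * (m * (2 * k))) * (p : ℝ) ^ (a * (2 * k * m)))⁻¹
        * (p : ℝ) ^ (a * (m * m)) := by
    rw [← zpow_natCast (p : ℝ) (a * (m * (2 * k))), ← zpow_natCast (p : ℝ) (a * (2 * k * m)),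
      ← zpow_natCast (p : ℝ) (a * (m * m)), ← zpow_add₀ hx, ← _root_.zpow_neg, ← zpow_add₀ hx]
    congr 1
    push_cast
    ring
  have hfacne : (((p : ℝ) ^ a) ^ (m * m) * (p : ℝ) ^ (m * (2 * k))) ≠ 0 := by positivity
  refine mul_right_cancel₀ hfacne ?_
  have hR1 : (p : ℝ) ^ (-(a : ℤ) * (4 * k * m - m ^ 2))
        * (Nat.card {XY : Matrix (Fin (2 * k)) (Fin m) (ZMod (p ^ a)) × Matrix (Fin (2 * k)) (Fin m) (ZMod (p ^ a)) // XY.1ᵀ * XY.2 = 1} : ℝ)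
        * (((p : ℝ) ^ a) ^ (m * m) * (p : ℝ) ^ (m * (2 * k)))
      = (p : ℝ) ^ (-(a : ℤ) * (4 * k * m - m ^ 2))
        * ((Nat.card {XY : Matrix (Fin (2 * k)) (Fin m) (ZMod (p ^ a)) × Matrix (Fin (2 * k)) (Fin m) (ZMod (p ^ a)) // XY.1ᵀ * XY.2 = 1} : ℝ)
          * ((p : ℝ) ^ a) ^ (m * m) * (p : ℝ) ^ (m * (2 * k))) := by ring
  rw [hR1, hreal, hE]
  simp only [← pow_mul]
  field_simp
  ring
end

section
/- Let p be a prime, let n₀ ≥ 1 and r ≥ 1 be integers, and let B ∈ M_r(ℤ_p) with det B ≠ 0. Put m = n₀ + r and A = 1_{n₀} ⊕ p·B ∈ M_m(ℤ_p) (block diagonal). Suppose lim_{a→∞} p^{−a r²} · #{(X, Y) ∈ (M_r(ℤ/p^aℤ))² : Xᵀ·(pB mod p^a)·Y = pB mod p^a} = L. Then lim_{a→∞} p^{−a m²} · #{(X, Y) ∈ (M_m(ℤ/p^aℤ))² : Xᵀ·(A mod p^a)·Y = A mod p^a} = ∏_{i=1}^{n₀} (1 − p^{−i}) · L. -/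
open Matrix Filter Topology

section PartA
attribute [local instance] Classical.propDecidable

variable (p : ℕ) [hp : Fact p.Prime]

lemma aux_dvd {a : ℕ} (ha : 1 ≤ a) : p ∣ p ^ a := dvd_pow_self p (by omega)

lemma zmod_isUnit_iff {a : ℕ} (ha : 1 ≤ a) (x : ZMod (p ^ a)) :
    IsUnit x ↔ IsUnit (ZMod.castHom (aux_dvd p ha) (ZMod p) x) := by
  haveI : NeZero (p ^ a) := ⟨pow_ne_zero a hp.out.pos.ne'⟩
  have hx : ((x.val : ℕ) : ZMod (p ^ a)) = x := ZMod.natCast_rightInverse x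
  have hπ : ZMod.castHom (aux_dvd p ha) (ZMod p) x = ((x.val : ℕ) : ZMod p) := by
    conv_lhs => rw [← hx]
    simp [map_natCast]
  rw [hπ]
  conv_lhs => rw [← hx]
  rw [ZMod.isUnit_iff_coprime, ZMod.isUnit_iff_coprime,
    Nat.coprime_pow_right_iff (by omega : 0 < a)]

lemma card_fiber_s9 {a : ℕ} (ha : 1 ≤ a) (y : ZMod p) :
    Nat.card {x : ZMod (p ^ a) // ZMod.castHom (aux_dvd p ha) (ZMod p) x = y} = p ^ (a - 1) := by
  haveI : NeZero (p ^ a) := ⟨pow_ne_zero a hp.out.pos.ne'⟩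
  set π := ZMod.castHom (aux_dvd p ha) (ZMod p) with hπdef
  have hsec : ∀ y : ZMod p, π ((y.val : ℕ) : ZMod (p ^ a)) = y := by
    intro y
    simp [hπdef, map_natCast, ZMod.natCast_rightInverse y]
  -- all fibers equinumerous with fiber over 0
  have e : ∀ y : ZMod p, {x : ZMod (p ^ a) // π x = y} ≃ {x : ZMod (p ^ a) // π x = 0} := by
    intro y
    refine ⟨fun x => ⟨x.1 - ((y.val : ℕ) : ZMod (p ^ a)), by simp [x.2, hsec]⟩,
      fun x => ⟨x.1 + ((y.val : ℕ) : ZMod (p ^ a)), by simp [x.2, hsec]⟩, ?_, ?_⟩ <;>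
      intro x <;> ext <;> simp
  have hcards : ∀ y : ZMod p, Nat.card {x : ZMod (p ^ a) // π x = y}
      = Nat.card {x : ZMod (p ^ a) // π x = 0} := fun y => Nat.card_congr (e y)
  have htot : (p : ℕ) ^ a = (p : ℕ) * Nat.card {x : ZMod (p ^ a) // π x = 0} := by
    have h1 : Nat.card (ZMod (p ^ a)) = p ^ a := by simp [Nat.card_eq_fintype_card]
    have h2 : Nat.card (Σ y : ZMod p, {x : ZMod (p ^ a) // π x = y}) = Nat.card (ZMod (p ^ a)) :=
      Nat.card_congr (Equiv.sigmaFiberEquiv π)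
    rw [Nat.card_eq_fintype_card, Fintype.card_sigma] at h2
    have : ∀ y : ZMod p, Fintype.card {x : ZMod (p ^ a) // π x = y}
        = Nat.card {x : ZMod (p ^ a) // π x = 0} := by
      intro y; rw [← Nat.card_eq_fintype_card]; exact hcards y
    simp only [this] at h2
    rw [Finset.sum_const, Finset.card_univ, ZMod.card, smul_eq_mul, h1] at h2
    omega
  rw [hcards y]
  have hp1 : (p:ℕ) ^ a = p * p ^ (a - 1) := by
    conv_lhs => rw [show a = 1 + (a - 1) by omega]
    rw [pow_add, pow_one]
  have := htot.symm.trans hp1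
  exact Nat.eq_of_mul_eq_mul_left hp.out.pos this

lemma card_matrix_fiber {a : ℕ} (ha : 1 ≤ a) {m n' : Type} [Fintype m] [Fintype n']
    (N : Matrix m n' (ZMod p)) :
    Nat.card {M : Matrix m n' (ZMod (p ^ a)) //
        M.map (ZMod.castHom (aux_dvd p ha) (ZMod p)) = N}
      = p ^ ((a - 1) * (Fintype.card m * Fintype.card n')) := by
  set π := ZMod.castHom (aux_dvd p ha) (ZMod p)
  have e1 : {M : Matrix m n' (ZMod (p ^ a)) // M.map π = N}
      ≃ {M : m → n' → ZMod (p ^ a) // ∀ i, ∀ j, π (M i j) = N i j} :=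
    Equiv.subtypeEquiv (Equiv.refl _) (by
      intro M
      constructor
      · intro h i j; rw [← h]; rfl
      · intro h; ext i j; exact h i j)
  have e2 : {M : m → n' → ZMod (p ^ a) // ∀ i, ∀ j, π (M i j) = N i j}
      ≃ ∀ i, {f : n' → ZMod (p ^ a) // ∀ j, π (f j) = N i j} :=
    Equiv.subtypePiEquivPi (β := fun _ => n' → ZMod (p ^ a)) (p := fun i f => ∀ j, π (f j) = N i j)
  have e3 : (∀ i, {f : n' → ZMod (p ^ a) // ∀ j, π (f j) = N i j})
      ≃ ∀ i, ∀ j, {x : ZMod (p ^ a) // π x = N i j} :=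
    Equiv.piCongrRight fun i => Equiv.subtypePiEquivPi (β := fun _ : n' => ZMod (p ^ a)) (p := fun j x => π x = N i j)
  rw [Nat.card_congr ((e1.trans e2).trans e3)]
  rw [Nat.card_pi]
  have : ∀ i : m, Nat.card (∀ j : n', {x : ZMod (p ^ a) // π x = N i j}) = p ^ ((a-1) * Fintype.card n') := by
    intro i
    rw [Nat.card_pi, Finset.prod_congr rfl (fun j _ => card_fiber_s9 p ha (N i j)),
      Finset.prod_const, Finset.card_univ, ← pow_mul, mul_comm]
  rw [Finset.prod_congr rfl (fun i _ => this i), Finset.prod_const, Finset.card_univ,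
    ← pow_mul]
  ring_nf

lemma matrix_isUnit_iff {a : ℕ} (ha : 1 ≤ a) {n : ℕ} (M : Matrix (Fin n) (Fin n) (ZMod (p ^ a))) :
    IsUnit M ↔ IsUnit (M.map (ZMod.castHom (aux_dvd p ha) (ZMod p))) := by
  rw [Matrix.isUnit_iff_isUnit_det, Matrix.isUnit_iff_isUnit_det,
    zmod_isUnit_iff p ha M.det]
  have h : ZMod.castHom (aux_dvd p ha) (ZMod p) M.det
      = (M.map (ZMod.castHom (aux_dvd p ha) (ZMod p))).det := by
    rw [RingHom.map_det]; rfl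
  rw [h]

lemma card_isUnit_matrix {a : ℕ} (ha : 1 ≤ a) (n : ℕ) :
    Nat.card {M : Matrix (Fin n) (Fin n) (ZMod (p ^ a)) // IsUnit M}
      = p ^ ((a - 1) * (n * n)) * ∏ i : Fin n, (p ^ n - p ^ (i : ℕ)) := by
  set π := ZMod.castHom (aux_dvd p ha) (ZMod p)
  have e : {M : Matrix (Fin n) (Fin n) (ZMod (p ^ a)) // IsUnit M}
      ≃ Σ N : {N : Matrix (Fin n) (Fin n) (ZMod p) // IsUnit N},
          {M : Matrix (Fin n) (Fin n) (ZMod (p ^ a)) // M.map π = N.1} := by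
    refine ⟨fun M => ⟨⟨M.1.map π, (matrix_isUnit_iff p ha M.1).mp M.2⟩, ⟨M.1, rfl⟩⟩,
      fun X => ⟨X.2.1, (matrix_isUnit_iff p ha X.2.1).mpr
        (by rw [X.2.2]; exact X.1.2)⟩, ?_, ?_⟩
    · intro M; rfl
    · rintro ⟨⟨N, hN⟩, ⟨M, hM⟩⟩
      have hM' : M.map ⇑π = N := hM
      subst hM'
      rfl
  rw [Nat.card_congr e]
  rw [Nat.card_eq_fintype_card, Fintype.card_sigma]
  have : ∀ N : {N : Matrix (Fin n) (Fin n) (ZMod p) // IsUnit N},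
      Fintype.card {M : Matrix (Fin n) (Fin n) (ZMod (p ^ a)) // M.map π = N.1}
        = p ^ ((a - 1) * (n * n)) := by
    intro N
    rw [← Nat.card_eq_fintype_card, card_matrix_fiber p ha N.1, Fintype.card_fin]
  rw [Finset.sum_congr rfl (fun N _ => this N), Finset.sum_const, Finset.card_univ,
    smul_eq_mul, mul_comm]
  congr 1
  have e2 : {N : Matrix (Fin n) (Fin n) (ZMod p) // IsUnit N} ≃ GL (Fin n) (ZMod p) :=
    ⟨fun N => N.2.unit, fun U => ⟨U.1, U.isUnit⟩,
     fun N => Subtype.ext (IsUnit.unit_spec N.2), fun U => Units.ext (IsUnit.unit_spec U.isUnit)⟩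
  rw [← Nat.card_eq_fintype_card, Nat.card_congr e2, Matrix.card_GL_field, ZMod.card]

lemma card_matrix_zmod (a m k : ℕ) :
    Nat.card (Matrix (Fin m) (Fin k) (ZMod (p ^ a))) = p ^ (a * (m * k)) := by
  haveI : NeZero (p ^ a) := ⟨pow_ne_zero a hp.out.pos.ne'⟩
  have e : Matrix (Fin m) (Fin k) (ZMod (p ^ a)) ≃ (Fin m → Fin k → ZMod (p ^ a)) :=
    Matrix.of.symm
  rw [Nat.card_congr e, Nat.card_fun, Nat.card_fun, Nat.card_zmod,
    Nat.card_eq_fintype_card, Nat.card_eq_fintype_card, Fintype.card_fin, Fintype.card_fin,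
    ← pow_mul, ← pow_mul]
  congr 1
  ring

end PartA


section PartC
lemma isUnit_one_add_smul_nil {R : Type} [CommRing R] {c : R} (hc : IsNilpotent c)
    {n : Type} [Fintype n] [DecidableEq n] (M : Matrix n n R) :
    IsUnit (1 + c • M) := by
  obtain ⟨k, hk⟩ := hc
  have hnil : IsNilpotent (c • M) := ⟨k, by rw [smul_pow, hk, zero_smul]⟩
  simpa [sub_neg_eq_add] using hnil.neg.isUnit_one_sub

lemma card_units_eq (M : Type) [Monoid M] :
    Nat.card Mˣ = Nat.card {x : M // IsUnit x} :=
  Nat.card_congr ⟨fun u => ⟨u.1, u.isUnit⟩, fun x => x.2.unit,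
    fun u => Units.ext (IsUnit.unit_spec u.isUnit), fun x => Subtype.ext (IsUnit.unit_spec x.2)⟩
end PartC

section PartB

lemma prod_Icc_eq {q : ℝ} (hq : q ≠ 0) (n : ℕ) :
    ∏ i ∈ Finset.Icc 1 n, (1 - q ^ (-(i : ℤ)))
      = q ^ (-((n^2 : ℕ) : ℤ)) * ∏ i : Fin n, (q ^ (n : ℕ) - q ^ (i : ℕ)) := by
  rw [Fin.prod_univ_eq_prod_range (fun i => q ^ (n:ℕ) - q ^ i) n]
  have step : ∀ i ∈ Finset.range n, q ^ (n:ℕ) - q ^ i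
      = q ^ (n:ℕ) * (1 - q ^ ((i : ℤ) - n)) := by
    intro i hi
    have e2 : q ^ (n:ℕ) * q ^ ((i:ℤ) - n) = q ^ (i:ℕ) := by
      rw [← zpow_natCast q n, ← zpow_add₀ hq,
        show ((n:ℤ) + ((i:ℤ) - n)) = (i:ℤ) by ring, zpow_natCast]
    rw [mul_sub, mul_one, e2]
  rw [Finset.prod_congr rfl step, Finset.prod_mul_distrib, Finset.prod_const,
    Finset.card_range, ← pow_mul]
  have reindex : ∏ i ∈ Finset.range n, (1 - q ^ ((i : ℤ) - n))
      = ∏ i ∈ Finset.Icc 1 n, (1 - q ^ (-(i : ℤ))) := by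
    refine Finset.prod_nbij' (fun i => n - i) (fun j => n - j) ?_ ?_ ?_ ?_ ?_
    · intro i hi; simp only [Finset.mem_range] at hi; simp only [Finset.mem_Icc]; omega
    · intro j hj; simp only [Finset.mem_Icc] at hj; simp only [Finset.mem_range]; omega
    · intro i hi; simp only [Finset.mem_range] at hi; omega
    · intro j hj; simp only [Finset.mem_Icc] at hj; omega
    · intro i hi; simp only [Finset.mem_range] at hi
      congr 1
      congr 1
      push_cast [Nat.cast_sub (by omega : i ≤ n)]
      ring
  rw [reindex, ← mul_assoc, ← zpow_natCast q (n*n), ← zpow_add₀ hq]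
  have : (-((n^2 : ℕ) : ℤ)) + ((n*n : ℕ) : ℤ) = 0 := by push_cast; ring
  rw [this, zpow_zero, one_mul]

end PartB


section PartD
variable {R : Type} [CommRing R] {n r : ℕ}

noncomputable def VV (b : Matrix (Fin r) (Fin r) R) (P Q : Matrix (Fin r) (Fin n) R) :
    Matrix (Fin n) (Fin n) R := 1 - Pᵀ * b * Q

noncomputable def CC (b : Matrix (Fin r) (Fin r) R) (P Q : Matrix (Fin r) (Fin n) R) :
    Matrix (Fin r) (Fin r) R := Q * (VV b P Q)⁻¹ * Pᵀ

noncomputable def EE (b : Matrix (Fin r) (Fin r) R) (P Q : Matrix (Fin r) (Fin n) R) :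
    Matrix (Fin r) (Fin r) R := 1 + CC b P Q * b

theorem mem_aux (b : Matrix (Fin r) (Fin r) R)
    (hb1 : ∀ (P Q : Matrix (Fin r) (Fin n) R), IsUnit (1 - Pᵀ * b * Q))
    (hb2 : ∀ C : Matrix (Fin r) (Fin r) R, IsUnit (1 + C * b))
    (U : (Matrix (Fin n) (Fin n) R)ˣ) (P Q : Matrix (Fin r) (Fin n) R)
    (X₂ Z : Matrix (Fin r) (Fin r) R) (hZ : X₂ᵀ * b * Z = b) :
      (fromBlocks U.1 (-(U.1 * ((VV b P Q)⁻¹)ᵀ * Qᵀ * bᵀ * X₂)) P X₂)ᵀ *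
          Matrix.fromBlocks 1 0 0 b *
          fromBlocks ((U⁻¹).1ᵀ * VV b P Q)
            (-((U⁻¹).1ᵀ * Pᵀ * (b * ((EE b P Q)⁻¹ * Z)))) Q ((EE b P Q)⁻¹ * Z)
        = Matrix.fromBlocks 1 0 0 b := by
  have hVd : IsUnit (VV b P Q).det := (Matrix.isUnit_iff_isUnit_det _).mp (hb1 P Q)
  have hEd : IsUnit (EE b P Q).det := (Matrix.isUnit_iff_isUnit_det _).mp (hb2 _)
  have hUU : U.1ᵀ * (U⁻¹).1ᵀ = 1 := by
    rw [← Matrix.transpose_mul, Units.inv_mul, Matrix.transpose_one]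
  rw [fromBlocks_transpose, fromBlocks_multiply, fromBlocks_multiply, Matrix.fromBlocks_inj]
  simp only [Matrix.mul_one, Matrix.mul_zero, Matrix.zero_mul, Matrix.one_mul,
    add_zero, zero_add, Matrix.transpose_neg, Matrix.transpose_mul,
    Matrix.transpose_transpose, Matrix.neg_mul, Matrix.mul_neg, neg_neg]
  refine ⟨?_, ?_, ?_, ?_⟩
  · rw [← Matrix.mul_assoc, hUU, Matrix.one_mul, VV, sub_add_cancel]
  · simp only [← Matrix.mul_assoc, hUU, Matrix.one_mul]
    simp [Matrix.mul_assoc]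
  · have h1 : ∀ (W : Matrix (Fin r) (Fin n) R), W * (U.1)ᵀ * ((U⁻¹).1)ᵀ = W := by
      intro W; rw [Matrix.mul_assoc, hUU, Matrix.mul_one]
    simp only [← Matrix.mul_assoc]
    rw [h1, Matrix.nonsing_inv_mul_cancel_right _ _ hVd, neg_add_cancel]
  · have h1 : ∀ (W : Matrix (Fin r) (Fin n) R), W * (U.1)ᵀ * ((U⁻¹).1)ᵀ = W := by
      intro W; rw [Matrix.mul_assoc, hUU, Matrix.mul_one]
    simp only [← Matrix.mul_assoc]
    rw [h1]
    have h2 : X₂ᵀ * b * Q * (VV b P Q)⁻¹ * Pᵀ * b * (EE b P Q)⁻¹ * Z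
        + X₂ᵀ * b * (EE b P Q)⁻¹ * Z
        = X₂ᵀ * b * (EE b P Q) * (EE b P Q)⁻¹ * Z := by
      rw [EE, CC]
      simp only [Matrix.mul_add, Matrix.add_mul, Matrix.mul_one, ← Matrix.mul_assoc]
      abel
    rw [h2, Matrix.mul_nonsing_inv_cancel_right _ _ hEd, hZ]

theorem surj_aux (b : Matrix (Fin r) (Fin r) R)
    (hb1 : ∀ (P Q : Matrix (Fin r) (Fin n) R), IsUnit (1 - Pᵀ * b * Q))
    (hb2 : ∀ C : Matrix (Fin r) (Fin r) R, IsUnit (1 + C * b))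
    (X Y : Matrix (Fin n ⊕ Fin r) (Fin n ⊕ Fin r) R)
    (h : Xᵀ * Matrix.fromBlocks 1 0 0 b * Y = Matrix.fromBlocks 1 0 0 b) :
    ∃ (U : (Matrix (Fin n) (Fin n) R)ˣ) (P Q : Matrix (Fin r) (Fin n) R)
      (X₂ Z : Matrix (Fin r) (Fin r) R), X₂ᵀ * b * Z = b ∧
      fromBlocks U.1 (-(U.1 * ((VV b P Q)⁻¹)ᵀ * Qᵀ * bᵀ * X₂)) P X₂ = X ∧
      fromBlocks ((U⁻¹).1ᵀ * VV b P Q)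
        (-((U⁻¹).1ᵀ * Pᵀ * (b * ((EE b P Q)⁻¹ * Z)))) Q ((EE b P Q)⁻¹ * Z) = Y := by
  set X11 := X.toBlocks₁₁ with hX11def
  set X12 := X.toBlocks₁₂ with hX12def
  set X21 := X.toBlocks₂₁ with hX21def
  set X22 := X.toBlocks₂₂ with hX22def
  set Y11 := Y.toBlocks₁₁ with hY11def
  set Y12 := Y.toBlocks₁₂ with hY12def
  set Y21 := Y.toBlocks₂₁ with hY21def
  set Y22 := Y.toBlocks₂₂ with hY22def
  have hX : X = fromBlocks X11 X12 X21 X22 := (fromBlocks_toBlocks X).symm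
  have hY : Y = fromBlocks Y11 Y12 Y21 Y22 := (fromBlocks_toBlocks Y).symm
  rw [hX, hY, fromBlocks_transpose, fromBlocks_multiply, fromBlocks_multiply,
    Matrix.fromBlocks_inj] at h
  simp only [Matrix.mul_one, Matrix.mul_zero, Matrix.zero_mul, Matrix.one_mul,
    add_zero, zero_add] at h
  obtain ⟨h11, h12, h21, h22⟩ := h
  have hV : X11ᵀ * Y11 = VV b X21 Y21 := by
    rw [VV, eq_sub_iff_add_eq]; exact h11
  have hVd : IsUnit (VV b X21 Y21).det := (Matrix.isUnit_iff_isUnit_det _).mp (hb1 X21 Y21)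
  have hEd : IsUnit (EE b X21 Y21).det := (Matrix.isUnit_iff_isUnit_det _).mp (hb2 _)
  have hprod : IsUnit (X11.det * Y11.det) := by
    have := congrArg Matrix.det hV
    rw [Matrix.det_mul, Matrix.det_transpose] at this
    rw [this]; exact hVd
  have hX11u : IsUnit X11 := (Matrix.isUnit_iff_isUnit_det _).mpr (isUnit_of_mul_isUnit_left hprod)
  have hY11d : IsUnit Y11.det := isUnit_of_mul_isUnit_right hprod
  have hX11d : IsUnit X11.det := isUnit_of_mul_isUnit_left hprod
  have hX11Td : IsUnit (X11ᵀ).det := by rwa [Matrix.det_transpose]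
  have hVinv : (VV b X21 Y21)⁻¹ = Y11⁻¹ * (X11ᵀ)⁻¹ := by
    rw [← hV, Matrix.mul_inv_rev]
  have hX12T : X12ᵀ = -(X22ᵀ * b * Y21 * Y11⁻¹) := by
    have e1 : X12ᵀ * Y11 = -(X22ᵀ * b * Y21) := by
      rw [← eq_neg_iff_add_eq_zero] at h21; exact h21
    rw [← Matrix.mul_nonsing_inv_cancel_right Y11 X12ᵀ hY11d, e1, Matrix.neg_mul]
  have hY12e : Y12 = -((X11ᵀ)⁻¹ * (X21ᵀ * b * Y22)) := by
    have e1 : X11ᵀ * Y12 = -(X21ᵀ * b * Y22) := by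
      rw [← eq_neg_iff_add_eq_zero] at h12; exact h12
    rw [← Matrix.nonsing_inv_mul_cancel_left X11ᵀ Y12 hX11Td, e1, Matrix.mul_neg]
  -- the key S-membership
  have hZ : X22ᵀ * b * (EE b X21 Y21 * Y22) = b := by
    have expand : X22ᵀ * b * (EE b X21 Y21 * Y22)
        = X22ᵀ * b * Y22 + X22ᵀ * b * Y21 * Y11⁻¹ * (X11ᵀ)⁻¹ * X21ᵀ * b * Y22 := by
      rw [EE, CC, hVinv]
      simp only [Matrix.add_mul, Matrix.mul_add, Matrix.one_mul, ← Matrix.mul_assoc]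
    have cross : X22ᵀ * b * Y21 * Y11⁻¹ * (X11ᵀ)⁻¹ * X21ᵀ * b * Y22 = X12ᵀ * Y12 := by
      rw [hX12T, hY12e]
      simp only [Matrix.neg_mul, Matrix.mul_neg, neg_neg, ← Matrix.mul_assoc]
    rw [expand, cross, add_comm, h22]
  refine ⟨hX11u.unit, X21, Y21, X22, EE b X21 Y21 * Y22, hZ, ?_, ?_⟩
  · rw [hX, Matrix.fromBlocks_inj]
    refine ⟨hX11u.unit_spec, ?_, rfl, rfl⟩
    · rw [← Matrix.transpose_inj]
      simp only [Matrix.transpose_neg, Matrix.transpose_mul, Matrix.transpose_transpose]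
      rw [hX11u.unit_spec, hX12T, hVinv]
      simp only [← Matrix.mul_assoc]
      rw [Matrix.nonsing_inv_mul_cancel_right _ _ hX11Td]
  · rw [hY]
    have hUinvT : ((hX11u.unit⁻¹).1)ᵀ = (X11ᵀ)⁻¹ := by
      rw [Matrix.coe_units_inv, hX11u.unit_spec, Matrix.transpose_nonsing_inv]
    have hEcancel : (EE b X21 Y21)⁻¹ * (EE b X21 Y21 * Y22) = Y22 :=
      Matrix.nonsing_inv_mul_cancel_left _ _ hEd
    rw [Matrix.fromBlocks_inj]
    refine ⟨?_, ?_, rfl, hEcancel⟩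
    · rw [hUinvT, ← hV, ← Matrix.mul_assoc, Matrix.nonsing_inv_mul _ hX11Td, Matrix.one_mul]
    · rw [hUinvT, hEcancel, hY12e]
      simp [Matrix.mul_assoc]

theorem card_main (b : Matrix (Fin r) (Fin r) R)
    (hb1 : ∀ (P Q : Matrix (Fin r) (Fin n) R), IsUnit (1 - Pᵀ * b * Q))
    (hb2 : ∀ C : Matrix (Fin r) (Fin r) R, IsUnit (1 + C * b)) :
    Nat.card ((Matrix (Fin n) (Fin n) R)ˣ × Matrix (Fin r) (Fin n) R ×
          Matrix (Fin r) (Fin n) R ×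
          {XY : Matrix (Fin r) (Fin r) R × Matrix (Fin r) (Fin r) R //
            XY.1ᵀ * b * XY.2 = b})
    = Nat.card {XY : Matrix (Fin n ⊕ Fin r) (Fin n ⊕ Fin r) R ×
          Matrix (Fin n ⊕ Fin r) (Fin n ⊕ Fin r) R //
        XY.1ᵀ * Matrix.fromBlocks 1 0 0 b * XY.2 = Matrix.fromBlocks 1 0 0 b} := by
  have hVu : ∀ P Q : Matrix (Fin r) (Fin n) R, IsUnit (VV b P Q) := fun P Q => hb1 P Q
  have hVd : ∀ P Q : Matrix (Fin r) (Fin n) R, IsUnit (VV b P Q).det :=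
    fun P Q => (Matrix.isUnit_iff_isUnit_det _).mp (hVu P Q)
  have hEd : ∀ P Q : Matrix (Fin r) (Fin n) R, IsUnit (EE b P Q).det :=
    fun P Q => (Matrix.isUnit_iff_isUnit_det _).mp (hb2 _)
  -- the forward map
  have hmem := mem_aux b hb1 hb2
  let f : ((Matrix (Fin n) (Fin n) R)ˣ × Matrix (Fin r) (Fin n) R ×
          Matrix (Fin r) (Fin n) R ×
          {XY : Matrix (Fin r) (Fin r) R × Matrix (Fin r) (Fin r) R //
            XY.1ᵀ * b * XY.2 = b}) →
      {XY : Matrix (Fin n ⊕ Fin r) (Fin n ⊕ Fin r) R ×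
          Matrix (Fin n ⊕ Fin r) (Fin n ⊕ Fin r) R //
        XY.1ᵀ * Matrix.fromBlocks 1 0 0 b * XY.2 = Matrix.fromBlocks 1 0 0 b} :=
    fun d =>
      ⟨(fromBlocks d.1.1 (-(d.1.1 * ((VV b d.2.1 d.2.2.1)⁻¹)ᵀ * d.2.2.1ᵀ * bᵀ * d.2.2.2.1.1))
          d.2.1 d.2.2.2.1.1,
        fromBlocks ((d.1⁻¹).1ᵀ * VV b d.2.1 d.2.2.1)
          (-((d.1⁻¹).1ᵀ * d.2.1ᵀ * (b * ((EE b d.2.1 d.2.2.1)⁻¹ * d.2.2.2.1.2))))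
          d.2.2.1 ((EE b d.2.1 d.2.2.1)⁻¹ * d.2.2.2.1.2)),
       hmem d.1 d.2.1 d.2.2.1 d.2.2.2.1.1 d.2.2.2.1.2 d.2.2.2.2⟩
  refine Nat.card_eq_of_bijective f ⟨?_, ?_⟩
  · -- injective
    rintro ⟨U, P, Q, ⟨⟨X₂, Z⟩, hZ⟩⟩ ⟨U', P', Q', ⟨⟨X₂', Z'⟩, hZ'⟩⟩ h
    simp only [f, Subtype.mk_eq_mk, Prod.mk.injEq] at h
    obtain ⟨hX, hY⟩ := h
    have e11 : U.1 = U'.1 := by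
      have := congrArg Matrix.toBlocks₁₁ hX; simpa using this
    have e21 : P = P' := by
      have := congrArg Matrix.toBlocks₂₁ hX; simpa using this
    have eQ : Q = Q' := by
      have := congrArg Matrix.toBlocks₂₁ hY; simpa using this
    have eX2 : X₂ = X₂' := by
      have := congrArg Matrix.toBlocks₂₂ hX; simpa using this
    have eY22 : (EE b P Q)⁻¹ * Z = (EE b P' Q')⁻¹ * Z' := by
      have := congrArg Matrix.toBlocks₂₂ hY; simpa using this
    have eZ : Z = Z' := by
      rw [← e21, ← eQ] at eY22
      have := congrArg (fun W => EE b P Q * W) eY22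
      simpa [← Matrix.mul_assoc, Matrix.mul_nonsing_inv _ (hEd P Q)] using this
    refine Prod.ext (Units.ext e11) (Prod.ext e21 (Prod.ext eQ (Subtype.ext ?_)))
    exact Prod.ext eX2 eZ
  · -- surjective
    rintro ⟨⟨X, Y⟩, h⟩
    obtain ⟨U, P, Q, X₂, Z, hZ, h1, h2⟩ := surj_aux b hb1 hb2 X Y h
    exact ⟨⟨U, P, Q, ⟨(X₂, Z), hZ⟩⟩, Subtype.ext (Prod.ext h1 h2)⟩

end PartD


/-- Lemma 5.2.1(2) (split case). -/
theorem stmt9 (p n₀ r : ℕ) [hp : Fact p.Prime] (hn₀ : 1 ≤ n₀) (hr : 1 ≤ r)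
    (B : Matrix (Fin r) (Fin r) (PadicInt p)) (hB : B.det ≠ 0) (L : ℝ)
    (hL : Filter.Tendsto (fun a : ℕ =>
        (p : ℝ) ^ (-(a : ℤ) * r ^ 2) *
          (Nat.card {XY : Matrix (Fin r) (Fin r) (ZMod (p ^ a)) ×
              Matrix (Fin r) (Fin r) (ZMod (p ^ a)) //
            XY.1ᵀ * ((p : PadicInt p) • B).map (PadicInt.toZModPow a) * XY.2 =
              ((p : PadicInt p) • B).map (PadicInt.toZModPow a)} : ℝ))
      atTop (𝓝 L)) :
    Filter.Tendsto (fun a : ℕ =>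
        (p : ℝ) ^ (-(a : ℤ) * (n₀ + r) ^ 2) *
          (Nat.card {XY : Matrix (Fin n₀ ⊕ Fin r) (Fin n₀ ⊕ Fin r) (ZMod (p ^ a)) ×
              Matrix (Fin n₀ ⊕ Fin r) (Fin n₀ ⊕ Fin r) (ZMod (p ^ a)) //
            XY.1ᵀ * (Matrix.fromBlocks (1 : Matrix (Fin n₀) (Fin n₀) (PadicInt p)) 0 0
                ((p : PadicInt p) • B)).map (PadicInt.toZModPow a) * XY.2 =
              (Matrix.fromBlocks (1 : Matrix (Fin n₀) (Fin n₀) (PadicInt p)) 0 0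
                ((p : PadicInt p) • B)).map (PadicInt.toZModPow a)} : ℝ))
      atTop (𝓝 ((∏ i ∈ Finset.Icc 1 n₀, (1 - (p : ℝ) ^ (-(i : ℤ)))) * L)) := by
  have hq0 : (0:ℝ) < (p:ℝ) := by exact_mod_cast hp.out.pos
  have hq : (p:ℝ) ≠ 0 := ne_of_gt hq0
  set q : ℝ := (p : ℝ) with hqdef
  set c : ℝ := ∏ i ∈ Finset.Icc 1 n₀, (1 - q ^ (-(i : ℤ))) with hcdef
  refine Filter.Tendsto.congr' ?_ (hL.const_mul c)
  filter_upwards [Filter.eventually_ge_atTop 1] with a ha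
  -- notation
  set b : Matrix (Fin r) (Fin r) (ZMod (p ^ a)) :=
    ((p : PadicInt p) • B).map (PadicInt.toZModPow a) with hbdef
  have hbs : b = (p : ZMod (p ^ a)) • (B.map (PadicInt.toZModPow a)) := by
    ext i j
    simp [hbdef, Matrix.map_apply, Matrix.smul_apply, smul_eq_mul, _root_.map_mul, map_natCast]
  have hnil : IsNilpotent ((p : ZMod (p ^ a))) :=
    ⟨a, by rw [← Nat.cast_pow, ZMod.natCast_self]⟩
  have hb1 : ∀ (P Q : Matrix (Fin r) (Fin n₀) (ZMod (p ^ a))),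
      IsUnit (1 - Pᵀ * b * Q) := by
    intro P Q
    rw [hbs, Matrix.mul_smul, Matrix.smul_mul, sub_eq_add_neg, ← smul_neg]
    exact isUnit_one_add_smul_nil hnil _
  have hb2 : ∀ C : Matrix (Fin r) (Fin r) (ZMod (p ^ a)), IsUnit (1 + C * b) := by
    intro C
    rw [hbs, Matrix.mul_smul]
    exact isUnit_one_add_smul_nil hnil _
  have hmap : (Matrix.fromBlocks (1 : Matrix (Fin n₀) (Fin n₀) (PadicInt p)) 0 0
      ((p : PadicInt p) • B)).map (PadicInt.toZModPow a) = Matrix.fromBlocks 1 0 0 b := by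
    rw [Matrix.fromBlocks_map, Matrix.fromBlocks_inj]
    exact ⟨Matrix.map_one _ (map_zero _) (_root_.map_one _),
      Matrix.map_zero _ (map_zero _), Matrix.map_zero _ (map_zero _), rfl⟩
  rw [hmap]
  -- the counting identity
  have hcard : Nat.card {XY : Matrix (Fin n₀ ⊕ Fin r) (Fin n₀ ⊕ Fin r) (ZMod (p ^ a)) ×
          Matrix (Fin n₀ ⊕ Fin r) (Fin n₀ ⊕ Fin r) (ZMod (p ^ a)) //
        XY.1ᵀ * Matrix.fromBlocks 1 0 0 b * XY.2 = Matrix.fromBlocks 1 0 0 b}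
      = (p ^ ((a - 1) * (n₀ * n₀)) * ∏ i : Fin n₀, (p ^ n₀ - p ^ (i : ℕ))) *
          (p ^ (a * (r * n₀)) * (p ^ (a * (r * n₀)) *
            Nat.card {XY : Matrix (Fin r) (Fin r) (ZMod (p ^ a)) ×
                Matrix (Fin r) (Fin r) (ZMod (p ^ a)) //
              XY.1ᵀ * b * XY.2 = b})) := by
    rw [← card_main b hb1 hb2, Nat.card_prod, Nat.card_prod, Nat.card_prod,
      card_units_eq, card_isUnit_matrix p ha n₀, card_matrix_zmod p a r n₀]
  rw [hcard]
  -- real arithmetic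
  set W : ℝ := ∏ i : Fin n₀, (q ^ (n₀ : ℕ) - q ^ (i : ℕ)) with hWdef
  set S : ℝ := (Nat.card {XY : Matrix (Fin r) (Fin r) (ZMod (p ^ a)) ×
      Matrix (Fin r) (Fin r) (ZMod (p ^ a)) // XY.1ᵀ * b * XY.2 = b} : ℝ) with hSdef
  have hWcast : ((∏ i : Fin n₀, (p ^ n₀ - p ^ (i : ℕ)) : ℕ) : ℝ) = W := by
    rw [Nat.cast_prod, hWdef]
    refine Finset.prod_congr rfl fun i _ => ?_
    rw [Nat.cast_sub (Nat.pow_le_pow_right hp.out.one_lt.le (le_of_lt i.2))]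
    push_cast
    rfl
  have hc' : c = q ^ (-((n₀ ^ 2 : ℕ) : ℤ)) * W := prod_Icc_eq hq n₀
  push_cast [hWcast]
  rw [hc']
  rw [show ((p:ℝ) ^ ((a - 1) * (n₀ * n₀)) : ℝ) = q ^ (((a - 1) * (n₀ * n₀) : ℕ) : ℤ) by
    rw [zpow_natCast]]
  rw [show ((p:ℝ) ^ (a * (r * n₀)) : ℝ) = q ^ ((a * (r * n₀) : ℕ) : ℤ) by rw [zpow_natCast]]
  rw [show (-(a:ℤ) * ((n₀:ℤ) + r) ^ 2) = (-((n₀ ^ 2 : ℕ) : ℤ) + -(a:ℤ) * r ^ 2)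
      - (((a - 1) * (n₀ * n₀) : ℕ) : ℤ) - ((a * (r * n₀) : ℕ) : ℤ) - ((a * (r * n₀) : ℕ) : ℤ) by
    push_cast [Nat.cast_sub ha]
    ring]
  rw [sub_eq_add_neg, sub_eq_add_neg, sub_eq_add_neg, zpow_add₀ hq, zpow_add₀ hq,
    zpow_add₀ hq, zpow_add₀ hq, _root_.zpow_neg, _root_.zpow_neg, _root_.zpow_neg]
  field_simp
  rw [hSdef, Nat.card_eq_fintype_card]
end

section
/- Let p be a prime, m ≥ 1 an integer, B ∈ M_m(ℤ_p) with det B ≠ 0, d ∈ ℤ_p a unit, and r ≥ 0 an integer. Suppose lim_{a→∞} p^{−a m²} · #{(X, Y) ∈ (M_m(ℤ/p^aℤ))² : Xᵀ·(B mod p^a)·Y = B mod p^a} = L. Then lim_{a→∞} p^{−a m²} · #{(X, Y) ∈ (M_m(ℤ/p^aℤ))² : Xᵀ·(p^r d B mod p^a)·Y = p^r d B mod p^a} = p^{r m²} · L. -/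
open Matrix Filter Topology

private lemma card_comp_eq {M N : Type*} [AddCommGroup M] [AddCommGroup N]
    (f : M →+ N) (hf : Function.Surjective f) (P : N → Prop) :
    Nat.card {x : M // P (f x)} = Nat.card {y : N // P y} * Nat.card f.ker := by
  have e : {x : M // P (f x)} ≃ {y : N // P y} × f.ker :=
    { toFun := fun x => (⟨f x.1, x.2⟩,
        ⟨x.1 - Function.surjInv hf (f x.1), by
          simp [AddMonoidHom.mem_ker, Function.surjInv_eq hf]⟩)
      invFun := fun yk => ⟨yk.2.1 + Function.surjInv hf yk.1.1, by
        have h0 : f yk.2.1 = 0 := yk.2.2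
        simpa [h0, Function.surjInv_eq hf] using yk.1.2⟩
      left_inv := fun x => by simp
      right_inv := fun yk => by
        have h0 : f yk.2.1 = 0 := yk.2.2
        ext <;> simp [h0, Function.surjInv_eq hf] }
  rw [Nat.card_congr e, Nat.card_prod]

private lemma pow_mul_eq_zero_iff (p r a : ℕ) [hp : Fact p.Prime] (ha : r ≤ a)
    (z : ZMod (p ^ a)) :
    (p : ZMod (p ^ a)) ^ r * z = 0 ↔
      ZMod.castHom (pow_dvd_pow p (Nat.sub_le a r)) (ZMod (p ^ (a - r))) z = 0 := by
  haveI : NeZero (p ^ a) := ⟨pow_ne_zero _ hp.out.pos.ne'⟩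
  have h1 : ZMod.castHom (pow_dvd_pow p (Nat.sub_le a r)) (ZMod (p ^ (a - r))) z
      = ((z.val : ℕ) : ZMod (p ^ (a - r))) := by
    rw [ZMod.castHom_apply, ← ZMod.natCast_val]
  rw [h1, ZMod.natCast_eq_zero_iff]
  conv_lhs => rw [← ZMod.natCast_zmod_val z]
  rw [show ((p : ZMod (p ^ a))) ^ r = ((p ^ r : ℕ) : ZMod (p ^ a)) by push_cast; ring,
    ← Nat.cast_mul, ZMod.natCast_eq_zero_iff]
  have h2 : ∀ v : ℕ, (p ^ a ∣ p ^ r * v ↔ p ^ (a - r) ∣ v) := by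
    intro v
    rw [show (p ^ a) = p ^ r * p ^ (a - r) from by rw [← pow_add, Nat.add_sub_cancel' ha]]
    exact mul_dvd_mul_iff_left (pow_ne_zero _ hp.out.pos.ne')
  exact h2 z.val

private lemma card_level (p m r : ℕ) [hp : Fact p.Prime]
    (B : Matrix (Fin m) (Fin m) (PadicInt p)) (d : PadicInt p) (hd : IsUnit d)
    (a : ℕ) (ha : r ≤ a) :
    Nat.card {XY : Matrix (Fin m) (Fin m) (ZMod (p ^ a)) ×
        Matrix (Fin m) (Fin m) (ZMod (p ^ a)) //
      XY.1ᵀ * (((p : PadicInt p) ^ r * d) • B).map (PadicInt.toZModPow a) * XY.2 =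
        (((p : PadicInt p) ^ r * d) • B).map (PadicInt.toZModPow a)}
    = p ^ (2 * (r * m ^ 2)) *
      Nat.card {XY : Matrix (Fin m) (Fin m) (ZMod (p ^ (a - r))) ×
          Matrix (Fin m) (Fin m) (ZMod (p ^ (a - r))) //
        XY.1ᵀ * B.map (PadicInt.toZModPow (a - r)) * XY.2 =
          B.map (PadicInt.toZModPow (a - r))} := by
  haveI : NeZero (p ^ a) := ⟨pow_ne_zero _ hp.out.pos.ne'⟩
  haveI : NeZero (p ^ (a - r)) := ⟨pow_ne_zero _ hp.out.pos.ne'⟩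
  set g : ZMod (p ^ a) →+* ZMod (p ^ (a - r)) :=
    ZMod.castHom (pow_dvd_pow p (Nat.sub_le a r)) (ZMod (p ^ (a - r))) with hg
  have hgs : Function.Surjective g := by
    intro y
    exact ⟨((y.val : ℕ) : ZMod (p ^ a)), by rw [map_natCast, ZMod.natCast_zmod_val]⟩
  have hcomp : ∀ x : PadicInt p, g (PadicInt.toZModPow a x) = PadicInt.toZModPow (a - r) x := by
    intro x
    exact RingHom.congr_fun (PadicInt.zmod_cast_comp_toZModPow (a - r) a (Nat.sub_le a r)) x
  -- the additive hom on pairs of matrices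
  set F : (Matrix (Fin m) (Fin m) (ZMod (p ^ a)) × Matrix (Fin m) (Fin m) (ZMod (p ^ a))) →+
      (Matrix (Fin m) (Fin m) (ZMod (p ^ (a - r))) × Matrix (Fin m) (Fin m) (ZMod (p ^ (a - r)))) :=
    AddMonoidHom.mk' (fun XY => (XY.1.map g, XY.2.map g)) (by
      intro x y
      refine Prod.ext ?_ ?_ <;> · ext i j; simp [Matrix.map_apply]) with hF
  have hFs : Function.Surjective F := by
    rintro ⟨X, Y⟩
    refine ⟨(X.map fun z => Function.surjInv hgs z, Y.map fun z => Function.surjInv hgs z), ?_⟩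
    refine Prod.ext ?_ ?_ <;> · ext i j; simp [hF, Matrix.map_apply, Function.surjInv_eq hgs]
  -- condition equivalence
  have hB' : (((p : PadicInt p) ^ r * d) • B).map (PadicInt.toZModPow a)
      = ((p : ZMod (p ^ a)) ^ r * PadicInt.toZModPow a d) • B.map (PadicInt.toZModPow a) := by
    ext i j
    simp [Matrix.map_apply, Matrix.smul_apply, _root_.map_mul, smul_eq_mul]
  have hu : IsUnit (PadicInt.toZModPow a d) := hd.map _
  obtain ⟨u, hu⟩ := hu
  have hcond : ∀ XY : Matrix (Fin m) (Fin m) (ZMod (p ^ a)) ×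
      Matrix (Fin m) (Fin m) (ZMod (p ^ a)),
      (XY.1ᵀ * (((p : PadicInt p) ^ r * d) • B).map (PadicInt.toZModPow a) * XY.2 =
        (((p : PadicInt p) ^ r * d) • B).map (PadicInt.toZModPow a)) ↔
      ((F XY).1ᵀ * B.map (PadicInt.toZModPow (a - r)) * (F XY).2 =
        B.map (PadicInt.toZModPow (a - r))) := by
    rintro ⟨X, Y⟩
    set B' := B.map (PadicInt.toZModPow a) with hB'def
    set c := (p : ZMod (p ^ a)) ^ r with hc
    rw [hB']
    have lhs_eq : Xᵀ * ((c * PadicInt.toZModPow a d) • B') * Y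
        = (c * PadicInt.toZModPow a d) • (Xᵀ * B' * Y) := by
      rw [Matrix.mul_smul, Matrix.smul_mul]
    rw [lhs_eq]
    constructor
    · intro h
      ext i j
      have h2 := congrArg (fun M => M i j) h
      simp only [Matrix.smul_apply, smul_eq_mul, ← hu] at h2
      -- h2 : c * u * (XᵀB'Y) i j = c * u * B' i j
      have h3 : c * ((Xᵀ * B' * Y) i j - B' i j) = 0 := by
        have h2' : (u : ZMod (p ^ a)) * (c * (Xᵀ * B' * Y) i j)
            = (u : ZMod (p ^ a)) * (c * B' i j) := by
          rw [show (u : ZMod (p ^ a)) * (c * (Xᵀ * B' * Y) i j)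
              = c * ↑u * (Xᵀ * B' * Y) i j by ring,
            show (u : ZMod (p ^ a)) * (c * B' i j) = c * ↑u * B' i j by ring]
          exact h2
        rw [mul_sub, (Units.mul_right_inj u).mp h2', sub_self]
      have h4 := (pow_mul_eq_zero_iff p r a ha _).mp h3
      rw [map_sub, sub_eq_zero] at h4
      -- translate to mapped matrices
      have e1 : g ((Xᵀ * B' * Y) i j) = ((F (X, Y)).1ᵀ * B.map (PadicInt.toZModPow (a - r))
          * (F (X, Y)).2) i j := by
        simp only [hF, AddMonoidHom.mk'_apply]
        rw [← Matrix.map_apply (f := ⇑g) (M := Xᵀ * B' * Y),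
          show (Xᵀ * B' * Y).map ⇑g = (X.map ⇑g)ᵀ * B'.map ⇑g * Y.map ⇑g by
            rw [Matrix.map_mul, Matrix.map_mul, Matrix.transpose_map],
          show B'.map ⇑g = B.map ⇑(PadicInt.toZModPow (a - r)) by
            rw [hB'def, Matrix.map_map]; ext i j; simp [Matrix.map_apply, hcomp]]
      have e2 : g (B' i j) = B.map (PadicInt.toZModPow (a - r)) i j := by
        simp [hB'def, Matrix.map_apply, hcomp]
      rw [e1, e2] at h4
      exact h4
    · intro h
      ext i j
      simp only [Matrix.smul_apply, smul_eq_mul]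
      have h4 : g ((Xᵀ * B' * Y) i j - B' i j) = 0 := by
        rw [map_sub, sub_eq_zero]
        have e1 : g ((Xᵀ * B' * Y) i j) = ((F (X, Y)).1ᵀ * B.map (PadicInt.toZModPow (a - r))
            * (F (X, Y)).2) i j := by
          simp only [hF, AddMonoidHom.mk'_apply]
          rw [← Matrix.map_apply (f := ⇑g) (M := Xᵀ * B' * Y),
            show (Xᵀ * B' * Y).map ⇑g = (X.map ⇑g)ᵀ * B'.map ⇑g * Y.map ⇑g by
              rw [Matrix.map_mul, Matrix.map_mul, Matrix.transpose_map],
            show B'.map ⇑g = B.map ⇑(PadicInt.toZModPow (a - r)) by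
              rw [hB'def, Matrix.map_map]; ext i j; simp [Matrix.map_apply, hcomp]]
        have e2 : g (B' i j) = B.map (PadicInt.toZModPow (a - r)) i j := by
          simp [hB'def, Matrix.map_apply, hcomp]
        rw [e1, e2, h]
      have h3 := (pow_mul_eq_zero_iff p r a ha _).mpr h4
      rw [mul_sub, sub_eq_zero] at h3
      calc c * PadicInt.toZModPow a d * (Xᵀ * B' * Y) i j
          = PadicInt.toZModPow a d * (c * (Xᵀ * B' * Y) i j) := by ring
        _ = PadicInt.toZModPow a d * (c * B' i j) := by rw [h3]
        _ = c * PadicInt.toZModPow a d * B' i j := by ring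
  -- now the counting
  have hcard := card_comp_eq F hFs
    (fun XY => XY.1ᵀ * B.map (PadicInt.toZModPow (a - r)) * XY.2
      = B.map (PadicInt.toZModPow (a - r)))
  rw [Nat.card_congr (Equiv.subtypeEquivRight hcond), hcard]
  -- compute Nat.card F.ker
  have htotal := card_comp_eq F hFs (fun _ => True)
  have cM : Nat.card (Matrix (Fin m) (Fin m) (ZMod (p ^ a)) ×
      Matrix (Fin m) (Fin m) (ZMod (p ^ a))) = p ^ (2 * (a * m ^ 2)) := by
    rw [Nat.card_prod, Nat.card_congr (Matrix.of (m := Fin m) (n := Fin m)).symm,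
      Nat.card_fun, Nat.card_fun, Nat.card_zmod, Nat.card_eq_fintype_card, Fintype.card_fin]
    rw [← pow_mul, ← pow_mul, ← pow_add]
    congr 1
    ring
  have cN : Nat.card (Matrix (Fin m) (Fin m) (ZMod (p ^ (a - r))) ×
      Matrix (Fin m) (Fin m) (ZMod (p ^ (a - r)))) = p ^ (2 * ((a - r) * m ^ 2)) := by
    rw [Nat.card_prod, Nat.card_congr (Matrix.of (m := Fin m) (n := Fin m)).symm,
      Nat.card_fun, Nat.card_fun, Nat.card_zmod, Nat.card_eq_fintype_card, Fintype.card_fin]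
    rw [← pow_mul, ← pow_mul, ← pow_add]
    congr 1
    ring
  have hker : Nat.card F.ker = p ^ (2 * (r * m ^ 2)) := by
    have e1 : Nat.card {x : Matrix (Fin m) (Fin m) (ZMod (p ^ a)) ×
        Matrix (Fin m) (Fin m) (ZMod (p ^ a)) // True}
        = p ^ (2 * (a * m ^ 2)) := by
      rw [Nat.card_congr (Equiv.subtypeUnivEquiv fun _ => trivial)]; exact cM
    have e2 : Nat.card {y : Matrix (Fin m) (Fin m) (ZMod (p ^ (a - r))) ×
        Matrix (Fin m) (Fin m) (ZMod (p ^ (a - r))) // True}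
        = p ^ (2 * ((a - r) * m ^ 2)) := by
      rw [Nat.card_congr (Equiv.subtypeUnivEquiv fun _ => trivial)]; exact cN
    rw [e1, e2] at htotal
    have haeq : 2 * (a * m ^ 2) = 2 * ((a - r) * m ^ 2) + 2 * (r * m ^ 2) := by
      obtain ⟨b, rfl⟩ : ∃ b, a = b + r := ⟨a - r, (Nat.sub_add_cancel ha).symm⟩
      rw [Nat.add_sub_cancel]; ring
    rw [haeq, pow_add] at htotal
    exact (Nat.eq_of_mul_eq_mul_left (pow_pos hp.out.pos _) htotal.symm)
  rw [hker]
  ring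

/-- Lemma 5.1.5 (split case): for a prime `p`, `m ≥ 1`, `B ∈ M_m(ℤ_p)` with `det B ≠ 0`,
a unit `d ∈ ℤ_p^*`, and `r ≥ 0`, if
`lim_{a→∞} p^{−am²} · #{(X,Y) ∈ M_m(ℤ/p^a)² : Xᵀ B Y ≡ B mod p^a} = L`, then
`lim_{a→∞} p^{−am²} · #{(X,Y) ∈ M_m(ℤ/p^a)² : Xᵀ (p^r d B) Y ≡ p^r d B mod p^a}
  = p^{rm²} · L`. -/
theorem stmt11 (p m : ℕ) [hp : Fact p.Prime] (hm : 1 ≤ m)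
    (B : Matrix (Fin m) (Fin m) (PadicInt p)) (hB : B.det ≠ 0)
    (d : PadicInt p) (hd : IsUnit d) (r : ℕ) (L : ℝ)
    (hL : Filter.Tendsto (fun a : ℕ =>
        (p : ℝ) ^ (-(a : ℤ) * m ^ 2) *
          (Nat.card {XY : Matrix (Fin m) (Fin m) (ZMod (p ^ a)) ×
              Matrix (Fin m) (Fin m) (ZMod (p ^ a)) //
            XY.1ᵀ * B.map (PadicInt.toZModPow a) * XY.2 = B.map (PadicInt.toZModPow a)} : ℝ))
      atTop (𝓝 L)) :
    Filter.Tendsto (fun a : ℕ =>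
        (p : ℝ) ^ (-(a : ℤ) * m ^ 2) *
          (Nat.card {XY : Matrix (Fin m) (Fin m) (ZMod (p ^ a)) ×
              Matrix (Fin m) (Fin m) (ZMod (p ^ a)) //
            XY.1ᵀ * (((p : PadicInt p) ^ r * d) • B).map (PadicInt.toZModPow a) * XY.2 =
              (((p : PadicInt p) ^ r * d) • B).map (PadicInt.toZModPow a)} : ℝ))
      atTop (𝓝 ((p : ℝ) ^ (r * m ^ 2) * L)) := by
  have hp0 : (p : ℝ) ≠ 0 := Nat.cast_ne_zero.mpr (Fact.out (p := p.Prime)).pos.ne'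
  have h1 : Filter.Tendsto (fun a : ℕ =>
      (p : ℝ) ^ (-((a - r : ℕ) : ℤ) * m ^ 2) *
        (Nat.card {XY : Matrix (Fin m) (Fin m) (ZMod (p ^ (a - r))) ×
            Matrix (Fin m) (Fin m) (ZMod (p ^ (a - r))) //
          XY.1ᵀ * B.map (PadicInt.toZModPow (a - r)) * XY.2 =
            B.map (PadicInt.toZModPow (a - r))} : ℝ))
      atTop (𝓝 L) := hL.comp (tendsto_sub_atTop_nat r)
  have h2 := h1.const_mul ((p : ℝ) ^ (r * m ^ 2))
  refine h2.congr' ?_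
  filter_upwards [eventually_ge_atTop r] with a ha
  rw [card_level p m r B d hd a ha]
  push_cast
  rw [show ((p : ℝ) ^ (2 * (r * m ^ 2)) : ℝ) = (p : ℝ) ^ ((2 * (r * m ^ 2) : ℕ) : ℤ) from
      (zpow_natCast _ _).symm,
    show ((p : ℝ) ^ (r * m ^ 2) : ℝ) = (p : ℝ) ^ ((r * m ^ 2 : ℕ) : ℤ) from
      (zpow_natCast _ _).symm]
  rw [show (p : ℝ) ^ ((r * m ^ 2 : ℕ) : ℤ) *
      ((p : ℝ) ^ (-((a - r : ℕ) : ℤ) * m ^ 2) * (Nat.card {XY : Matrix (Fin m) (Fin m)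
        (ZMod (p ^ (a - r))) × Matrix (Fin m) (Fin m) (ZMod (p ^ (a - r))) //
        XY.1ᵀ * B.map (PadicInt.toZModPow (a - r)) * XY.2 =
          B.map (PadicInt.toZModPow (a - r))} : ℝ))
      = ((p : ℝ) ^ ((r * m ^ 2 : ℕ) : ℤ) * (p : ℝ) ^ (-((a - r : ℕ) : ℤ) * m ^ 2)) *
        (Nat.card {XY : Matrix (Fin m) (Fin m) (ZMod (p ^ (a - r))) ×
          Matrix (Fin m) (Fin m) (ZMod (p ^ (a - r))) //
          XY.1ᵀ * B.map (PadicInt.toZModPow (a - r)) * XY.2 =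
            B.map (PadicInt.toZModPow (a - r))} : ℝ) from by ring,
    ← mul_assoc]
  congr 1
  rw [← zpow_add₀ hp0, ← zpow_add₀ hp0]
  congr 1
  have hsub : ((a - r : ℕ) : ℤ) = (a : ℤ) - r := by
    omega
  rw [hsub]
  push_cast
  ring
end

section
/- Let p be a prime and m ≥ 1 an integer. For each integer n ≥ 0, the number s_n of additive subgroups of ℤ^m of index p^n is finite, and for every real number u with 0 < u < p^{1−m} the series Σ_{n≥0} s_n u^n converges with Σ_{n≥0} s_n u^n = ∏_{i=0}^{m−1} (1 − p^i u)^{−1}. -/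
open AddSubgroup

variable {G : Type*} [AddCommGroup G]

/-- The subgroup of `G × ℤ` generated by `K × {0}` and `(v, c)`. -/
def latSub (K : AddSubgroup G) (c : ℕ) (v : G) : AddSubgroup (G × ℤ) where
  carrier := {x | ∃ k : ℤ, x.2 = k * c ∧ x.1 - k • v ∈ K}
  zero_mem' := ⟨0, by simp, by simpa using K.zero_mem⟩
  add_mem' := by
    rintro ⟨g, t⟩ ⟨g', t'⟩ ⟨k, hk, hg⟩ ⟨k', hk', hg'⟩
    replace hk : t = k * c := hk
    replace hk' : t' = k' * c := hk'
    replace hg : g - k • v ∈ K := hg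
    replace hg' : g' - k' • v ∈ K := hg'
    refine ⟨k + k', ?_, ?_⟩
    · show t + t' = _
      rw [hk, hk', add_mul]
    · show g + g' - (k + k') • v ∈ K
      have := K.add_mem hg hg'
      convert this using 1
      rw [add_zsmul]
      abel
  neg_mem' := by
    rintro ⟨g, t⟩ ⟨k, hk, hg⟩
    replace hk : t = k * c := hk
    replace hg : g - k • v ∈ K := hg
    refine ⟨-k, ?_, ?_⟩
    · show -t = _
      rw [hk, neg_mul]
    · show -g - (-k) • v ∈ K
      have := K.neg_mem hg
      convert this using 1
      rw [neg_zsmul]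
      abel

lemma mem_latSub {K : AddSubgroup G} {c : ℕ} {v : G} {x : G × ℤ} :
    x ∈ latSub K c v ↔ ∃ k : ℤ, x.2 = k * c ∧ x.1 - k • v ∈ K := Iff.rfl

lemma latSub_congr {K : AddSubgroup G} {c : ℕ} {v v' : G} (h : v - v' ∈ K) :
    latSub K c v = latSub K c v' := by
  ext ⟨g, t⟩
  simp only [mem_latSub]
  constructor <;> rintro ⟨k, hk, hg⟩ <;> refine ⟨k, hk, ?_⟩
  · have := K.add_mem hg (K.zsmul_mem h k)
    convert this using 1
    rw [smul_sub]
    abel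
  · have := K.sub_mem hg (K.zsmul_mem h k)
    convert this using 1
    rw [smul_sub]
    abel

lemma latSub_index {K : AddSubgroup G} {c : ℕ} (hc : 0 < c) (v : G) :
    (latSub K c v).index = c * K.index := by
  have hcz : (c : ℤ) ≠ 0 := by exact_mod_cast hc.ne'
  set F : (G × ℤ) → (G ⧸ K) × ZMod c := fun x =>
      (QuotientAddGroup.mk (x.1 - (x.2 / (c : ℤ)) • v), (x.2 : ZMod c)) with hF
  have key : Nat.card ((G × ℤ) ⧸ latSub K c v) = Nat.card ((G ⧸ K) × ZMod c) := by
    apply Nat.card_congr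
    refine Equiv.ofBijective (Quotient.liftOn' · F ?_) ⟨?_, ?_⟩
    · rintro ⟨g, t⟩ ⟨g', t'⟩ hrel
      rw [QuotientAddGroup.leftRel_apply] at hrel
      obtain ⟨k, hk, hg⟩ := hrel
      replace hk : -t + t' = k * c := hk
      replace hg : -g + g' - k • v ∈ K := hg
      have ht' : t' = t + k * c := by linarith [hk]
      have hdiv : t' / (c : ℤ) = t / (c : ℤ) + k := by
        rw [ht', Int.add_mul_ediv_right _ _ hcz]
      simp only [hF, Prod.mk.injEq]
      constructor
      · rw [QuotientAddGroup.eq]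
        have : -(g - (t / (c:ℤ)) • v) + (g' - (t' / (c:ℤ)) • v)
            = (-g + g' - k • v) := by
          rw [hdiv, add_zsmul]
          abel
        rw [this]
        exact hg
      · rw [ht']
        push_cast
        simp [ZMod.natCast_self]
    · -- injective
      intro a b hab
      revert hab
      refine Quotient.inductionOn₂' a b ?_
      rintro ⟨g, t⟩ ⟨g', t'⟩ hFxy
      simp only [Quotient.liftOn'_mk, hF, Prod.mk.injEq] at hFxy
      obtain ⟨h1, h2⟩ := hFxy
      apply Quotient.sound'
      rw [QuotientAddGroup.leftRel_apply]
      have hdvd : (c : ℤ) ∣ t' - t :=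
        (ZMod.intCast_eq_intCast_iff t t' c).mp h2 |>.dvd
      obtain ⟨k, hk⟩ := hdvd
      refine ⟨k, by show -t + t' = k * c; linarith [hk], ?_⟩
      have ht' : t' = t + k * c := by linarith [hk]
      have hdiv : t' / (c : ℤ) = t / (c : ℤ) + k := by
        rw [ht', Int.add_mul_ediv_right _ _ hcz]
      rw [QuotientAddGroup.eq] at h1
      show -g + g' - k • v ∈ K
      convert h1 using 1
      rw [hdiv, add_zsmul]
      abel
    · -- surjective
      rintro ⟨gbar, r⟩
      obtain ⟨g⟩ := gbar
      obtain ⟨t, rfl⟩ := ZMod.intCast_surjective r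
      refine ⟨QuotientAddGroup.mk (g + (t / (c : ℤ)) • v, t), ?_⟩
      simp only [Quotient.liftOn'_mk, hF, Prod.mk.injEq]
      refine Prod.ext ?_ rfl
      show QuotientAddGroup.mk _ = QuotientAddGroup.mk g
      congr 1
      abel
  rw [AddSubgroup.index_eq_card, key, Nat.card_prod, Nat.card_zmod,
    ← AddSubgroup.index_eq_card, mul_comm]
/-- `latSub` for a coset representative. -/
def latSubQ (K : AddSubgroup G) (c : ℕ) (vbar : G ⧸ K) : AddSubgroup (G × ℤ) :=
  Quotient.liftOn' vbar (latSub K c) (fun v v' h => by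
    apply latSub_congr
    have h' : -v + v' ∈ K := QuotientAddGroup.leftRel_apply.mp h
    have h2 : v - v' = -(-v + v') := by abel
    rw [h2]
    exact K.neg_mem h')

@[simp] lemma latSubQ_mk {K : AddSubgroup G} {c : ℕ} {v : G} :
    latSubQ K c (QuotientAddGroup.mk v) = latSub K c v := rfl

lemma latSubQ_index {K : AddSubgroup G} {c : ℕ} (hc : 0 < c) (vbar : G ⧸ K) :
    (latSubQ K c vbar).index = c * K.index := by
  obtain ⟨v⟩ := vbar
  exact latSub_index hc v

lemma latSub_map_snd {K : AddSubgroup G} {c : ℕ} {v : G} :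
    (latSub K c v).map (AddMonoidHom.snd G ℤ) = AddSubgroup.zmultiples (c : ℤ) := by
  ext t
  simp only [AddSubgroup.mem_map, Int.mem_zmultiples_iff]
  constructor
  · rintro ⟨⟨g, s⟩, ⟨k, hk, -⟩, rfl⟩
    replace hk : s = k * (c : ℤ) := hk
    refine ⟨k, ?_⟩
    show s = (c : ℤ) * k
    rw [hk]; ring
  · rintro ⟨k, hk⟩
    exact ⟨(k • v, t), ⟨k, show t = k * (c : ℤ) by rw [hk]; ring,
      by simpa using K.zero_mem⟩, rfl⟩

lemma latSub_comap_inl {K : AddSubgroup G} {c : ℕ} (hc : 0 < c) {v : G} :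
    (latSub K c v).comap (AddMonoidHom.inl G ℤ) = K := by
  have hcz : (c : ℤ) ≠ 0 := by exact_mod_cast hc.ne'
  ext g
  simp only [AddSubgroup.mem_comap, AddMonoidHom.inl_apply, mem_latSub]
  constructor
  · rintro ⟨k, hk, hg⟩
    have hk0 : k = 0 := by
      rcases mul_eq_zero.mp hk.symm with h | h
      · exact h
      · exact absurd h hcz
    subst hk0
    simpa using hg
  · intro hg
    exact ⟨0, by simp, by simpa using hg⟩

lemma latSub_self_mem {K : AddSubgroup G} {c : ℕ} {v : G} :
    (v, (c : ℤ)) ∈ latSub K c v :=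
  ⟨1, by simp, by simpa using K.zero_mem⟩

variable {p : ℕ}

lemma latSub_surj (hp : p.Prime) (n : ℕ) (H : AddSubgroup (G × ℤ)) (hH : H.index = p ^ n) :
    ∃ a ≤ n, ∃ K : AddSubgroup G, K.index = p ^ (n - a) ∧ ∃ v : G,
      latSub K (p ^ a) v = H := by
  haveI : H.FiniteIndex := ⟨by rw [hH]; exact pow_ne_zero _ hp.ne_zero⟩
  have hpn : ((0 : G), ((p : ℤ)) ^ n) ∈ H := by
    have := H.nsmul_index_mem ((0 : G), (1 : ℤ))
    rw [hH] at this
    simpa using this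
  obtain ⟨g0, hg0⟩ := Int.subgroup_cyclic (H.map (AddMonoidHom.snd G ℤ))
  rw [← AddSubgroup.zmultiples_eq_closure] at hg0
  have hdvd : g0 ∣ (p : ℤ) ^ n := by
    rw [← Int.mem_zmultiples_iff, ← hg0]
    exact ⟨((0 : G), (p : ℤ) ^ n), hpn, rfl⟩
  have hdvd' : g0.natAbs ∣ p ^ n := by
    have h2 := Int.natAbs_dvd_natAbs.mpr hdvd
    rwa [Int.natAbs_pow, Int.natAbs_natCast] at h2
  obtain ⟨a, ha, hag⟩ := (Nat.dvd_prime_pow hp).mp hdvd'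
  have hL : H.map (AddMonoidHom.snd G ℤ) = AddSubgroup.zmultiples ((p ^ a : ℕ) : ℤ) := by
    rw [hg0]
    ext x
    rw [Int.mem_zmultiples_iff, Int.mem_zmultiples_iff, ← Int.natAbs_dvd, hag]
  have hmem : ((p ^ a : ℕ) : ℤ) ∈ H.map (AddMonoidHom.snd G ℤ) := by
    rw [hL]; exact AddSubgroup.mem_zmultiples _
  obtain ⟨⟨v, t⟩, hv, ht⟩ := hmem
  replace ht : t = ((p ^ a : ℕ) : ℤ) := ht
  subst ht
  set K := H.comap (AddMonoidHom.inl G ℤ) with hKdef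
  have heq : latSub K (p ^ a) v = H := by
    ext ⟨g, t⟩
    constructor
    · rintro ⟨k, hk, hg⟩
      replace hk : t = k * ((p ^ a : ℕ) : ℤ) := hk
      have hgK : ((g - k • v : G), (0 : ℤ)) ∈ H := hg
      have := H.add_mem hgK (H.zsmul_mem hv k)
      convert this using 1
      refine Prod.ext ?_ ?_
      · show g = (g - k • v) + k • v
        abel
      · show t = 0 + k • ((p ^ a : ℕ) : ℤ)
        rw [hk, zero_add, zsmul_eq_mul, Int.cast_id]
    · intro hgt
      have htL : t ∈ H.map (AddMonoidHom.snd G ℤ) := ⟨(g, t), hgt, rfl⟩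
      rw [hL, Int.mem_zmultiples_iff] at htL
      obtain ⟨k, hk⟩ := htL
      refine ⟨k, by rw [hk]; ring, ?_⟩
      have := H.sub_mem hgt (H.zsmul_mem hv k)
      have h0 : ((g, t) - k • (v, ((p ^ a : ℕ) : ℤ))) = ((g - k • v : G), (0 : ℤ)) := by
        refine Prod.ext rfl ?_
        show t - k • ((p ^ a : ℕ) : ℤ) = 0
        rw [zsmul_eq_mul, Int.cast_id, hk]
        ring
      rw [h0] at this
      exact this
  have hidx : p ^ a * K.index = p ^ n := by
    rw [← latSub_index (pow_pos hp.pos a) v, heq, hH]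
  have hKidx : K.index = p ^ (n - a) := by
    have h2 : p ^ a * K.index = p ^ a * p ^ (n - a) := by
      rw [hidx, ← pow_add, Nat.add_sub_cancel' ha]
    exact Nat.eq_of_mul_eq_mul_left (pow_pos hp.pos a) h2
  exact ⟨a, ha, K, hKidx, v, heq⟩

lemma natCard_sigma {ι : Type*} [Fintype ι] (f : ι → Type*) [∀ i, Finite (f i)] :
    Nat.card (Σ i, f i) = ∑ i, Nat.card (f i) := by
  letI : ∀ i, Fintype (f i) := fun i => Fintype.ofFinite _
  simp [Nat.card_eq_fintype_card]

lemma card_step (hp : p.Prime) (n : ℕ)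
    (hfin : ∀ b : ℕ, Finite {K : AddSubgroup G // K.index = p ^ b}) :
    Finite {H : AddSubgroup (G × ℤ) // H.index = p ^ n} ∧
    Nat.card {H : AddSubgroup (G × ℤ) // H.index = p ^ n}
      = ∑ a ∈ Finset.range (n + 1),
          Nat.card {K : AddSubgroup G // K.index = p ^ (n - a)} * p ^ (n - a) := by
  classical
  haveI hf1 : ∀ a : Fin (n + 1), Finite {K : AddSubgroup G // K.index = p ^ (n - (a : ℕ))} :=
    fun _ => hfin _
  haveI hf2 : ∀ (a : Fin (n + 1)) (K : {K : AddSubgroup G // K.index = p ^ (n - (a : ℕ))}),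
      Finite (G ⧸ (K : AddSubgroup G)) := by
    intro a K
    haveI : (K : AddSubgroup G).FiniteIndex := ⟨by rw [K.2]; exact pow_ne_zero _ hp.ne_zero⟩
    infer_instance
  have hidx : ∀ (a : Fin (n + 1)) (K : {K : AddSubgroup G // K.index = p ^ (n - (a : ℕ))})
      (vb : G ⧸ (K : AddSubgroup G)),
      (latSubQ (K : AddSubgroup G) (p ^ (a : ℕ)) vb).index = p ^ n := by
    intro a K vb
    rw [latSubQ_index (pow_pos hp.pos _) vb, K.2, ← pow_add,
      Nat.add_sub_cancel' (Nat.lt_succ_iff.mp a.2)]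
  let Ψ : (Σ a : Fin (n + 1), Σ K : {K : AddSubgroup G // K.index = p ^ (n - (a : ℕ))},
        G ⧸ (K : AddSubgroup G)) → {H : AddSubgroup (G × ℤ) // H.index = p ^ n} :=
    fun x => ⟨latSubQ _ (p ^ (x.1 : ℕ)) x.2.2, hidx _ _ _⟩
  have hsurj : Function.Surjective Ψ := by
    rintro ⟨H, hH⟩
    obtain ⟨a, ha, K, hK, v, heq⟩ := latSub_surj hp n H hH
    exact ⟨⟨⟨a, Nat.lt_succ_of_le ha⟩, ⟨K, hK⟩, QuotientAddGroup.mk v⟩,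
      Subtype.ext (by simpa [Ψ] using heq)⟩
  have hinj : Function.Injective Ψ := by
    intro x y h
    obtain ⟨⟨a, ha⟩, ⟨K, hK⟩, vb⟩ := x
    obtain ⟨⟨a', ha'⟩, ⟨K', hK'⟩, vb'⟩ := y
    obtain ⟨v⟩ := vb
    obtain ⟨v'⟩ := vb'
    replace h : latSub K (p ^ a) v = latSub K' (p ^ a') v' := congrArg Subtype.val h
    have haa : a = a' := by
      have h1 := latSub_map_snd (K := K) (c := p ^ a) (v := v)
      have h2 := latSub_map_snd (K := K') (c := p ^ a') (v := v')
      rw [h] at h1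
      rw [h1] at h2
      have d1 : ((p ^ a' : ℕ) : ℤ) ∣ ((p ^ a : ℕ) : ℤ) := by
        rw [← Int.mem_zmultiples_iff, ← h2]
        exact AddSubgroup.mem_zmultiples _
      have d2 : ((p ^ a : ℕ) : ℤ) ∣ ((p ^ a' : ℕ) : ℤ) := by
        rw [← Int.mem_zmultiples_iff, h2]
        exact AddSubgroup.mem_zmultiples _
      have : (p : ℕ) ^ a = p ^ a' := by
        exact_mod_cast Int.dvd_antisymm (by positivity) (by positivity) d2 d1
      exact Nat.pow_right_injective hp.two_le this
    subst haa
    have hKK : K = K' := by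
      have h1 := latSub_comap_inl (K := K) (c := p ^ a) (v := v) (pow_pos hp.pos a)
      have h2 := latSub_comap_inl (K := K') (c := p ^ a) (v := v') (pow_pos hp.pos a)
      rw [h] at h1
      rw [h2] at h1
      exact h1.symm
    subst hKK
    have hvv : (QuotientAddGroup.mk v : G ⧸ K) = QuotientAddGroup.mk v' := by
      have hm : ((v : G), ((p ^ a : ℕ) : ℤ)) ∈ latSub K (p ^ a) v' := by
        rw [← h]; exact latSub_self_mem
      obtain ⟨k, hk, hv⟩ := hm
      replace hk : ((p ^ a : ℕ) : ℤ) = k * ((p ^ a : ℕ) : ℤ) := hk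
      have hk1 : k = 1 := by
        have hpz : ((p ^ a : ℕ) : ℤ) ≠ 0 := by
          exact_mod_cast (pow_pos hp.pos a).ne'
        have h4 : k * ((p ^ a : ℕ) : ℤ) = 1 * ((p ^ a : ℕ) : ℤ) := by
          rw [one_mul, ← hk]
        exact mul_right_cancel₀ hpz h4
      subst hk1
      rw [QuotientAddGroup.eq]
      replace hv : v - (1 : ℤ) • v' ∈ K := hv
      have h5 : -v + v' = -(v - (1 : ℤ) • v') := by
        rw [one_zsmul]
        abel
      rw [h5]
      exact K.neg_mem hv
    have hfinal : (⟨⟨a, ha⟩, ⟨⟨K, hK⟩, (QuotientAddGroup.mk v : G ⧸ K)⟩⟩ :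
        Σ a : Fin (n + 1), Σ K : {K : AddSubgroup G // K.index = p ^ (n - (a : ℕ))},
          G ⧸ (K : AddSubgroup G))
        = ⟨⟨a, ha'⟩, ⟨⟨K, hK'⟩, (QuotientAddGroup.mk v' : G ⧸ K)⟩⟩ := by
      rw [hvv]
    exact hfinal
  haveI hDfin : Finite (Σ a : Fin (n + 1), Σ K : {K : AddSubgroup G // K.index = p ^ (n - (a : ℕ))},
      G ⧸ (K : AddSubgroup G)) := by infer_instance
  haveI : Finite {H : AddSubgroup (G × ℤ) // H.index = p ^ n} := Finite.of_surjective Ψ hsurj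
  refine ⟨inferInstance, ?_⟩
  rw [← Nat.card_eq_of_bijective Ψ ⟨hinj, hsurj⟩]
  rw [natCard_sigma]
  rw [← Fin.sum_univ_eq_sum_range
    (fun a => Nat.card {K : AddSubgroup G // K.index = p ^ (n - a)} * p ^ (n - a)) (n + 1)]
  refine Finset.sum_congr rfl fun a _ => ?_
  letI : Fintype {K : AddSubgroup G // K.index = p ^ (n - (a : ℕ))} := Fintype.ofFinite _
  rw [natCard_sigma]
  have hcard : ∀ K : {K : AddSubgroup G // K.index = p ^ (n - (a : ℕ))},
      Nat.card (G ⧸ (K : AddSubgroup G)) = p ^ (n - (a : ℕ)) := fun K => by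
    rw [← AddSubgroup.index_eq_card, K.2]
  rw [Finset.sum_congr rfl fun K _ => hcard K, Finset.sum_const, Finset.card_univ,
    smul_eq_mul, ← Nat.card_eq_fintype_card]

/-- Splitting off the first coordinate of `Fin (m+1) → ℤ`. -/
def finSuccAddEquiv (m : ℕ) : (Fin (m + 1) → ℤ) ≃+ (Fin m → ℤ) × ℤ where
  toFun f := (fun i => f i.succ, f 0)
  invFun x := Fin.cons x.2 x.1
  left_inv f := by
    funext i
    refine Fin.cases ?_ ?_ i <;> simp
  right_inv x := by
    refine Prod.ext ?_ rfl
    funext i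
    simp
  map_add' f g := rfl

/-- Transfer subgroups of given index along an additive equivalence. -/
def subEquiv {A B : Type*} [AddCommGroup A] [AddCommGroup B] (e : A ≃+ B) (j : ℕ) :
    {H : AddSubgroup A // H.index = j} ≃ {H : AddSubgroup B // H.index = j} where
  toFun H := ⟨H.1.map e.toAddMonoidHom, by
    rw [AddSubgroup.index_map_eq _ e.surjective
      (by rw [(AddMonoidHom.ker_eq_bot_iff _).mpr e.injective]; exact bot_le), H.2]⟩
  invFun H := ⟨H.1.map e.symm.toAddMonoidHom, by
    rw [AddSubgroup.index_map_eq _ e.symm.surjective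
      (by rw [(AddMonoidHom.ker_eq_bot_iff _).mpr e.symm.injective]; exact bot_le), H.2]⟩
  left_inv H := by
    refine Subtype.ext ?_
    simp only
    rw [AddSubgroup.map_map]
    have : e.symm.toAddMonoidHom.comp e.toAddMonoidHom = AddMonoidHom.id A := by
      ext x; simp
    rw [this, AddSubgroup.map_id]
  right_inv H := by
    refine Subtype.ext ?_
    simp only
    rw [AddSubgroup.map_map]
    have : e.toAddMonoidHom.comp e.symm.toAddMonoidHom = AddMonoidHom.id B := by
      ext x; simp
    rw [this, AddSubgroup.map_id]

lemma s_main (p : ℕ) (hp : p.Prime) (m : ℕ) :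
    (∀ n : ℕ, Finite {H : AddSubgroup (Fin m → ℤ) // H.index = p ^ n}) ∧
      (∀ u : ℝ, 0 < u → u < (p : ℝ) ^ ((1 : ℤ) - m) →
        HasSum (fun n : ℕ =>
            (Nat.card {H : AddSubgroup (Fin m → ℤ) // H.index = p ^ n} : ℝ) * u ^ n)
          (∏ i ∈ Finset.range m, (1 - (p : ℝ) ^ i * u)⁻¹)) := by
  induction m with
  | zero =>
    have hall : ∀ H : AddSubgroup (Fin 0 → ℤ), H = ⊤ := fun H => by
      ext x
      refine ⟨fun _ => trivial, fun _ => ?_⟩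
      rw [Subsingleton.elim x 0]
      exact H.zero_mem
    haveI hss : Subsingleton (AddSubgroup (Fin 0 → ℤ)) :=
      ⟨fun H K => by rw [hall H, hall K]⟩
    have hidx : ∀ H : AddSubgroup (Fin 0 → ℤ), H.index = 1 := fun H => by
      rw [hall H, AddSubgroup.index_top]
    have hcard : ∀ n : ℕ,
        (Nat.card {H : AddSubgroup (Fin 0 → ℤ) // H.index = p ^ n} : ℝ)
          = if n = 0 then 1 else 0 := by
      intro n
      rcases Nat.eq_zero_or_pos n with rfl | hn
      · have h1 : Nat.card {H : AddSubgroup (Fin 0 → ℤ) // H.index = p ^ 0} = 1 := by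
          rw [Nat.card_eq_one_iff_unique]
          exact ⟨inferInstance, ⟨⟨⊤, by rw [AddSubgroup.index_top, pow_zero]⟩⟩⟩
        rw [h1, if_pos rfl, Nat.cast_one]
      · have hne : p ^ n ≠ 1 := Nat.one_lt_pow hn.ne' hp.one_lt |>.ne'
        haveI : IsEmpty {H : AddSubgroup (Fin 0 → ℤ) // H.index = p ^ n} :=
          ⟨fun H => hne (by rw [← H.2, hidx H.1])⟩
        rw [if_neg hn.ne', Nat.card_of_isEmpty]
        norm_num
    refine ⟨fun n => Finite.of_subsingleton, fun u hu hu' => ?_⟩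
    have : HasSum (fun n : ℕ => (if n = 0 then (1 : ℝ) else 0) * u ^ n)
        ((if 0 = 0 then (1 : ℝ) else 0) * u ^ 0) :=
      hasSum_single 0 (fun b hb => by rw [if_neg hb, zero_mul])
    simp only [if_pos rfl, if_true, pow_zero, mul_one, Finset.range_zero, Finset.prod_empty] at this ⊢
    convert this using 2 with n
    rw [hcard n]
  | succ m ih =>
    obtain ⟨ihfin, ihsum⟩ := ih
    have e := finSuccAddEquiv m
    have step := fun n => card_step (G := Fin m → ℤ) hp n (fun b => ihfin b)
    have hfin : ∀ n : ℕ, Finite {H : AddSubgroup (Fin (m + 1) → ℤ) // H.index = p ^ n} := by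
      intro n
      haveI := (step n).1
      exact Finite.of_equiv _ (subEquiv e (p ^ n)).symm
    have hcard : ∀ n : ℕ, Nat.card {H : AddSubgroup (Fin (m + 1) → ℤ) // H.index = p ^ n}
        = ∑ a ∈ Finset.range (n + 1),
            Nat.card {K : AddSubgroup (Fin m → ℤ) // K.index = p ^ (n - a)} * p ^ (n - a) := by
      intro n
      rw [Nat.card_congr (subEquiv e (p ^ n)), (step n).2]
    refine ⟨hfin, fun u hu hu' => ?_⟩
    have hppos : (0 : ℝ) < p := by exact_mod_cast hp.pos
    have hpne : (p : ℝ) ≠ 0 := hppos.ne'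
    have hp1 : (1 : ℝ) ≤ p := by exact_mod_cast hp.one_le
    -- from u < p ^ (1 - (m+1)) = p ^ (-m)
    have hm1 : ((1 : ℤ) - ((m : ℕ) + 1 : ℕ)) = -(m : ℤ) := by push_cast; ring
    rw [hm1] at hu'
    have hu1 : u < 1 := by
      refine hu'.trans_le ?_
      rw [zpow_neg, zpow_natCast]
      exact inv_le_one_of_one_le₀ (one_le_pow₀ hp1)
    have hpu : 0 < (p : ℝ) * u := by positivity
    have hpu' : (p : ℝ) * u < (p : ℝ) ^ ((1 : ℤ) - m) := by
      have : (p : ℝ) ^ ((1 : ℤ) - m) = p * (p : ℝ) ^ (-(m : ℤ)) := by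
        rw [sub_eq_add_neg, zpow_add₀ hpne, zpow_one]
      rw [this]
      exact (mul_lt_mul_iff_right₀ hppos).mpr hu'
    have hIH := ihsum ((p : ℝ) * u) hpu hpu'
    have hgeo : HasSum (fun a : ℕ => u ^ a) (1 - u)⁻¹ :=
      hasSum_geometric_of_lt_one hu.le hu1
    set f : ℕ → ℝ := fun a => u ^ a with hf
    set g : ℕ → ℝ := fun b =>
      (Nat.card {H : AddSubgroup (Fin m → ℤ) // H.index = p ^ b} : ℝ) * ((p : ℝ) * u) ^ b
      with hg
    have hfn : Summable fun a => ‖f a‖ := by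
      rw [show (fun a => ‖f a‖) = fun a => |f a| from funext fun a => Real.norm_eq_abs _]
      rw [summable_abs_iff]
      exact hgeo.summable
    have hgn : Summable fun a => ‖g a‖ := by
      rw [show (fun a => ‖g a‖) = fun a => |g a| from funext fun a => Real.norm_eq_abs _]
      rw [summable_abs_iff]
      exact hIH.summable
    have hsummable : Summable fun n => ∑ kl ∈ Finset.HasAntidiagonal.antidiagonal n, f kl.1 * g kl.2 :=
      (summable_norm_sum_mul_antidiagonal_of_summable_norm hfn hgn).of_norm
    have htsum : (∑' n, f n) * ∑' n, g n
        = ∑' n, ∑ kl ∈ Finset.HasAntidiagonal.antidiagonal n, f kl.1 * g kl.2 :=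
      tsum_mul_tsum_eq_tsum_sum_antidiagonal_of_summable_norm hfn hgn
    have hCauchy : HasSum (fun n => ∑ kl ∈ Finset.HasAntidiagonal.antidiagonal n, f kl.1 * g kl.2)
        ((1 - u)⁻¹ * ∏ i ∈ Finset.range m, (1 - (p : ℝ) ^ i * ((p : ℝ) * u))⁻¹) := by
      rw [hsummable.hasSum_iff, ← htsum, hgeo.tsum_eq, hIH.tsum_eq]
    -- identify the function
    have hfun : (fun n : ℕ =>
        (Nat.card {H : AddSubgroup (Fin (m + 1) → ℤ) // H.index = p ^ n} : ℝ) * u ^ n)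
        = fun n => ∑ kl ∈ Finset.HasAntidiagonal.antidiagonal n, f kl.1 * g kl.2 := by
      funext n
      rw [hcard n, Finset.Nat.sum_antidiagonal_eq_sum_range_succ_mk
        (fun kl => f kl.1 * g kl.2) n]
      push_cast
      rw [Finset.sum_mul]
      refine Finset.sum_congr rfl fun a ha => ?_
      have han : a ≤ n := Nat.lt_succ_iff.mp (Finset.mem_range.mp ha)
      simp only [hf, hg]
      rw [mul_pow, show u ^ n = u ^ a * u ^ (n - a) from by
        rw [← pow_add, Nat.add_sub_cancel' han]]
      ring
    -- identify the value
    have hval : (∏ i ∈ Finset.range (m + 1), (1 - (p : ℝ) ^ i * u)⁻¹)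
        = (1 - u)⁻¹ * ∏ i ∈ Finset.range m, (1 - (p : ℝ) ^ i * ((p : ℝ) * u))⁻¹ := by
      rw [Finset.prod_range_succ', pow_zero, one_mul, mul_comm]
      congr 1
      refine Finset.prod_congr rfl fun i _ => ?_
      rw [pow_succ]
      ring_nf
    rw [hfun, hval]
    exact hCauchy

/-- Generating function for sublattice counts (used in Propositions 5.3.1 and 5.4.3): for a
prime `p` and `m ≥ 1`, the number `s_n` of additive subgroups of `ℤ^m` of index `p^n` is
finite, and for `0 < u < p^{1−m}` one has `Σ_{n≥0} s_n u^n = ∏_{i=0}^{m−1} (1 − p^i u)⁻¹`. -/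
theorem stmt15 (p : ℕ) [hp : Fact p.Prime] (m : ℕ) (hm : 1 ≤ m) :
    (∀ n : ℕ, {H : AddSubgroup (Fin m → ℤ) | H.index = p ^ n}.Finite) ∧
    ∀ u : ℝ, 0 < u → u < (p : ℝ) ^ ((1 : ℤ) - m) →
      HasSum
        (fun n : ℕ =>
          (Nat.card {H : AddSubgroup (Fin m → ℤ) // H.index = p ^ n} : ℝ) * u ^ n)
        (∏ i ∈ Finset.range m, (1 - (p : ℝ) ^ i * u)⁻¹) := by
  obtain ⟨hfin, hsum⟩ := s_main p hp.out m
  refine ⟨fun n => ?_, fun u h0 h1 => hsum u h0 h1⟩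
  have : Finite ↥{H : AddSubgroup (Fin m → ℤ) | H.index = p ^ n} := hfin n
  exact Set.toFinite _
end
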